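/- arXiv:1501.04774 — 6 statements merged into one kernel-verified Lean document; each statement's English description precedes it below -/
import Mathlib

section
/- Let n ≥ 2 and 1 ≤ n₁ < n be integers and let k ∈ ℕ. In the polynomial ring ℝ[x₁,…,xₙ], let M_k be the set of all products ∏_{1≤i≤n₁, n₁+1≤t≤n} (x_i·x_t)^{p_{it}} taken over all tuples of natural numbers (p_{it})_{1≤i≤n₁, n₁+1≤t≤n} with ∑_{i,t} p_{it} = k. Then the dimension of the ℝ-linear span of M_k equals C(n₁+k−1, k)·C(n−n₁+k−1, k). -/
/-!
Writing `r i = ∑ₜ p i t` and `c t = ∑ᵢ p i t` for the margins of `p`, the product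
`∏ (xᵢ xₜ)^{p i t}` is the monomial `x^r · x^c`. Conversely every pair of margins `r` on the first
block and `c` on the second with the same total `k` comes from some `p` (a transportation
argument: remove one unit from a positive row and a positive column and induct on `k`). So the
spanning set is exactly the set of monomials `x^a x^b` with `a`, `b` of degree `k` supported on
the two blocks. Monomials are linearly independent, and since the blocks are disjoint `(a, b)` is
recovered from `a + b`, so the dimension is the product of the numbers of degree-`k` monomials
in `n₁` and in `n - n₁` variables.
-/

open Finset MvPolynomial Module

theorem exists_eq_add_piSingle_of_ne_zero {α : Type*} [DecidableEq α] {r : α → ℕ} {i₀ : α}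
    (h : r i₀ ≠ 0) : ∃ r' : α → ℕ, r = r' + Pi.single i₀ 1 := by
  refine ⟨r - Pi.single i₀ 1, funext fun i => ?_⟩
  rcases eq_or_ne i i₀ with rfl | hi
  · simp only [Pi.add_apply, Pi.sub_apply, Pi.single_eq_same]
    omega
  · simp [hi]

theorem exists_nat_matrix_with_margins {α β : Type*} [DecidableEq α] [DecidableEq β]
    (A : Finset α) (B : Finset β) (r : α → ℕ) (c : β → ℕ)
    (h : ∑ i ∈ A, r i = ∑ t ∈ B, c t) :
    ∃ p : α → β → ℕ, (∀ i ∈ A, ∑ t ∈ B, p i t = r i) ∧ ∀ t ∈ B, ∑ i ∈ A, p i t = c t := by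
  induction hk : ∑ i ∈ A, r i generalizing r c with
  | zero =>
    refine ⟨0, fun i hi => ?_, fun t ht => ?_⟩
    · simpa using ((sum_eq_zero_iff.mp hk) i hi).symm
    · simpa using ((sum_eq_zero_iff.mp (h ▸ hk)) t ht).symm
  | succ k ih =>
    obtain ⟨i₀, hi₀, hr⟩ := exists_ne_zero_of_sum_ne_zero (s := A) (f := r) (by omega)
    obtain ⟨t₀, ht₀, hc⟩ := exists_ne_zero_of_sum_ne_zero (s := B) (f := c) (by omega)
    obtain ⟨r, rfl⟩ := exists_eq_add_piSingle_of_ne_zero hr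
    obtain ⟨c, rfl⟩ := exists_eq_add_piSingle_of_ne_zero hc
    simp only [Pi.add_apply, sum_add_distrib, sum_pi_single', if_pos hi₀, if_pos ht₀] at hk h
    obtain ⟨p, hrow, hcol⟩ := ih r c (by omega) (by omega)
    refine ⟨fun i t => p i t + (Pi.single i₀ 1 : α → ℕ) i * (Pi.single t₀ 1 : β → ℕ) t,
      fun i hi => ?_, fun t ht => ?_⟩
    · simp only [sum_add_distrib, hrow i hi, ← mul_sum, sum_pi_single', if_pos ht₀, mul_one,
        Pi.add_apply]
    · simp only [sum_add_distrib, hcol t ht, ← sum_mul, sum_pi_single', if_pos hi₀, one_mul,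
        Pi.add_apply]

theorem Finsupp.add_injOn_of_disjoint {σ M : Type*} [AddZeroClass M] {A B : Finset σ}
    (hAB : Disjoint A B) :
    Set.InjOn (fun x : (σ →₀ M) × (σ →₀ M) => x.1 + x.2)
      {x | x.1.support ⊆ A ∧ x.2.support ⊆ B} := by
  rintro ⟨a, b⟩ ⟨ha, hb⟩ ⟨a', b'⟩ ⟨ha', hb'⟩ h
  have hj := fun j => DFunLike.congr_fun h j
  simp only [Finsupp.add_apply] at hj
  have vanish : ∀ (f : σ →₀ M) (s : Finset σ) j, f.support ⊆ s → j ∉ s → f j = 0 :=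
    fun f s j hf hj => Finsupp.notMem_support_iff.mp fun h => hj (hf h)
  refine Prod.ext (Finsupp.ext fun j => ?_) (Finsupp.ext fun j => ?_) <;> by_cases hjA : j ∈ A
  · have hjB : j ∉ B := disjoint_left.mp hAB hjA
    simpa [vanish b B j hb hjB, vanish b' B j hb' hjB] using hj j
  · simp [vanish a A j ha hjA, vanish a' A j ha' hjA]
  · have hjB : j ∉ B := disjoint_left.mp hAB hjA
    simp [vanish b B j hb hjB, vanish b' B j hb' hjB]
  · simpa [vanish a A j ha hjA, vanish a' A j ha' hjA] using hj j

namespace MvPolynomial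

variable {σ R : Type*}

theorem finrank_span_monomial_one [CommRing R] [Nontrivial R] (D : Finset (σ →₀ ℕ)) :
    finrank R (Submodule.span R ((fun d => monomial d (1 : R)) '' (D : Set (σ →₀ ℕ)))) = #D := by
  have hli : LinearIndependent R (basisMonomials σ R ∘ ((↑) : D → σ →₀ ℕ)) :=
    (basisMonomials σ R).linearIndependent.comp _ Subtype.val_injective
  rw [← Fintype.card_coe, ← finrank_span_eq_card hli, Set.range_comp, Subtype.range_coe_subtype,
    coe_basisMonomials]
  rfl

variable [CommSemiring R]

theorem prod_prod_X_mul_X_pow (A B : Finset σ) (p : σ → σ → ℕ) :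
    ∏ i ∈ A, ∏ t ∈ B, (X i * X t : MvPolynomial σ R) ^ p i t =
      (∏ i ∈ A, X i ^ ∑ t ∈ B, p i t) * ∏ t ∈ B, X t ^ ∑ i ∈ A, p i t := by
  simp only [mul_pow, prod_mul_distrib, prod_pow_eq_pow_sum]
  rw [prod_comm (s := A)]
  simp only [prod_pow_eq_pow_sum]

theorem setOf_prod_prod_X_mul_X_pow_eq_image_monomial [DecidableEq σ] (A B : Finset σ) (k : ℕ) :
    {f : MvPolynomial σ R | ∃ p : σ → σ → ℕ, ∑ i ∈ A, ∑ t ∈ B, p i t = k ∧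
        f = ∏ i ∈ A, ∏ t ∈ B, (X i * X t) ^ p i t} =
      (fun d => monomial d 1) ''
        ((A.finsuppAntidiag k ×ˢ B.finsuppAntidiag k).image (fun x => x.1 + x.2) :
          Set (σ →₀ ℕ)) := by
  ext f
  simp only [Set.mem_ofPred_eq, coe_image, Set.image_image, mem_coe, Set.mem_image, Prod.exists,
    mem_product, mem_finsuppAntidiag]
  constructor
  · rintro ⟨p, hp, rfl⟩
    refine ⟨Finsupp.indicator A (fun i _ => ∑ t ∈ B, p i t),
      Finsupp.indicator B (fun t _ => ∑ i ∈ A, p i t),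
      ⟨⟨?_, Finsupp.support_indicator_subset _ _⟩, ⟨?_, Finsupp.support_indicator_subset _ _⟩⟩, ?_⟩
    · rw [← hp]
      exact sum_congr rfl fun i hi => Finsupp.indicator_of_mem hi _
    · rw [← hp, sum_comm]
      exact sum_congr rfl fun t ht => Finsupp.indicator_of_mem ht _
    · rw [prod_prod_X_mul_X_pow, prod_X_pow, prod_X_pow, monomial_mul, one_mul]
  · rintro ⟨a, b, ⟨⟨ha, haA⟩, ⟨hb, hbB⟩⟩, rfl⟩
    obtain ⟨p, hrow, hcol⟩ := exists_nat_matrix_with_margins A B a b (ha.trans hb.symm)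
    have hA : ∏ i ∈ A, (X i : MvPolynomial σ R) ^ ∑ t ∈ B, p i t = monomial a 1 := by
      rw [prod_congr rfl fun i hi => by rw [hrow i hi], prod_X_pow,
        ← (Finsupp.eq_indicator_self_iff A).mpr haA]
    have hB : ∏ t ∈ B, (X t : MvPolynomial σ R) ^ ∑ i ∈ A, p i t = monomial b 1 := by
      rw [prod_congr rfl fun t ht => by rw [hcol t ht], prod_X_pow,
        ← (Finsupp.eq_indicator_self_iff B).mpr hbB]
    refine ⟨p, (sum_congr rfl hrow).trans ha, ?_⟩
    rw [prod_prod_X_mul_X_pow, hA, hB, monomial_mul, one_mul]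

end MvPolynomial

theorem stmt_0_general (n n₁ : ℕ) (h2 : n₁ < n) (k : ℕ) :
    Module.finrank ℝ (Submodule.span ℝ
      {f : MvPolynomial (Fin n) ℝ |
        ∃ p : Fin n → Fin n → ℕ,
          (∑ i ∈ Finset.univ.filter (fun i : Fin n => i.val < n₁),
            ∑ t ∈ Finset.univ.filter (fun t : Fin n => n₁ ≤ t.val), p i t) = k ∧
          f = ∏ i ∈ Finset.univ.filter (fun i : Fin n => i.val < n₁),
              ∏ t ∈ Finset.univ.filter (fun t : Fin n => n₁ ≤ t.val),
                (X i * X t) ^ p i t}) =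
    Nat.choose (n₁ + k - 1) k * Nat.choose (n - n₁ + k - 1) k := by
  set A := Finset.univ.filter (fun i : Fin n => i.val < n₁)
  set B := Finset.univ.filter (fun t : Fin n => n₁ ≤ t.val)
  have hAB : Disjoint A B := disjoint_filter.mpr fun _ _ h => not_le.mpr h
  have hcardA : #A = n₁ := by rw [Fin.card_filter_val_lt, min_eq_right h2.le]
  have hcardB : #B = n - n₁ := by
    have : #A + #B = n := by
      simpa using card_filter_add_card_filter_not (s := univ) (fun i : Fin n => i.val < n₁)
    omega
  rw [setOf_prod_prod_X_mul_X_pow_eq_image_monomial, finrank_span_monomial_one,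
    card_image_of_injOn ((Finsupp.add_injOn_of_disjoint hAB).mono fun x hx => ?_),
    card_product, card_finsuppAntidiag_nat_eq_choose, card_finsuppAntidiag_nat_eq_choose,
    hcardA, hcardB]
  simp only [coe_product, Set.mem_prod, mem_coe, mem_finsuppAntidiag] at hx
  exact ⟨hx.1.2, hx.2.2⟩

/-- In ℝ[x₁,…,xₙ] (variables indexed 0,…,n−1, so `i.val < n₁`
corresponds to 1 ≤ i ≤ n₁ and `n₁ ≤ t.val` to n₁+1 ≤ t ≤ n), the dimension of the
span of the set of products ∏ (x_i x_t)^{p_{it}} with ∑ p_{it} = k equals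
C(n₁+k−1, k) · C(n−n₁+k−1, k). -/
theorem stmt_0 (n n₁ : ℕ) (hn : 2 ≤ n) (h1 : 1 ≤ n₁) (h2 : n₁ < n) (k : ℕ) :
    Module.finrank ℝ (Submodule.span ℝ
      {f : MvPolynomial (Fin n) ℝ |
        ∃ p : Fin n → Fin n → ℕ,
          (∑ i ∈ Finset.univ.filter (fun i : Fin n => i.val < n₁),
            ∑ t ∈ Finset.univ.filter (fun t : Fin n => n₁ ≤ t.val), p i t) = k ∧
          f = ∏ i ∈ Finset.univ.filter (fun i : Fin n => i.val < n₁),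
              ∏ t ∈ Finset.univ.filter (fun t : Fin n => n₁ ≤ t.val),
                (X i * X t) ^ p i t}) =
    Nat.choose (n₁ + k - 1) k * Nat.choose (n - n₁ + k - 1) k :=
  stmt_0_general n n₁ h2 k
end

section
/- Let n ≥ 2 and k ∈ ℕ. In B = ℝ[x₁,…,xₙ,y₁,…,yₙ], the set of products ∏_{t=2}^{n} (x₁·x_t − y₁·y_t)^{h_t} over all tuples (h₂,…,hₙ) of natural numbers with ∑_{t=2}^{n} h_t = k is linearly independent over ℝ, and hence the dimension of its ℝ-linear span equals C(n−2+k, k). The same holds for the set of products ∏_{i=1}^{n−1} (x_i·xₙ − y_i·yₙ)^{h_i} with ∑_{i=1}^{n−1} h_i = k. -/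
open MvPolynomial

/-- x-variables: `Sum.inl`, y-variables: `Sum.inr` (0-based indexing). -/
noncomputable def xv {n : ℕ} (i : Fin n) : MvPolynomial (Fin n ⊕ Fin n) ℝ := X (Sum.inl i)

noncomputable def yv {n : ℕ} (i : Fin n) : MvPolynomial (Fin n ⊕ Fin n) ℝ := X (Sum.inr i)

/-- The set of products ∏_{t=2}^{n} (x₁ x_t − y₁ y_t)^{h_t} over tuples with ∑ h_t = k
(0-based: x₁ is index 0, t ranges over indices with 0 < t.val). -/
def S1 (n k : ℕ) (hn : 2 ≤ n) : Set (MvPolynomial (Fin n ⊕ Fin n) ℝ) :=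
  {f | ∃ h : Fin n → ℕ,
    (∑ t ∈ Finset.univ.filter (fun t : Fin n => 0 < t.val), h t) = k ∧
    f = ∏ t ∈ Finset.univ.filter (fun t : Fin n => 0 < t.val),
      (xv (⟨0, by omega⟩ : Fin n) * xv t - yv (⟨0, by omega⟩ : Fin n) * yv t) ^ h t}

/-- The set of products ∏_{i=1}^{n−1} (x_i xₙ − y_i yₙ)^{h_i} over tuples with ∑ h_i = k
(0-based: xₙ is index n−1, i ranges over indices with i.val < n−1). -/
def S2 (n k : ℕ) (hn : 2 ≤ n) : Set (MvPolynomial (Fin n ⊕ Fin n) ℝ) :=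
  {f | ∃ h : Fin n → ℕ,
    (∑ i ∈ Finset.univ.filter (fun i : Fin n => i.val < n - 1), h i) = k ∧
    f = ∏ i ∈ Finset.univ.filter (fun i : Fin n => i.val < n - 1),
      (xv i * xv (⟨n - 1, by omega⟩ : Fin n) - yv i * yv (⟨n - 1, by omega⟩ : Fin n)) ^ h i}

/-!
Setting every `y`-variable to zero sends `∏ (x_a x_t - y_a y_t) ^ h_t`, with `∑ h_t = k`, to the
monomial `x_a ^ k * ∏ x_t ^ h_t`, and since `a` is not among the `t`, distinct exponent tuples give
distinct monomials. Monomials are linearly independent, hence so are the products, and they are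
counted by the weak compositions of `k` into `n - 1` parts: `C(n - 2 + k, k)` of them.
-/

open Finset Module Submodule

lemma Finset.card_piAntidiag_nat_eq_choose {ι : Type*} [DecidableEq ι] (s : Finset ι) (k : ℕ) :
    #(s.piAntidiag k) = (#s + k - 1).choose k := by
  rw [← card_finsuppAntidiag_nat_eq_choose, finsuppAntidiag, card_map, card_attach]

section PairForm

variable {σ R : Type*} [CommRing R]

noncomputable def pairForm (a t : σ) : MvPolynomial (σ ⊕ σ) R :=
  X (Sum.inl a) * X (Sum.inl t) - X (Sum.inr a) * X (Sum.inr t)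

lemma pairForm_comm (a t : σ) : (pairForm a t : MvPolynomial (σ ⊕ σ) R) = pairForm t a := by
  simp only [pairForm, mul_comm]

noncomputable def pairFormProd (a : σ) (F : Finset σ) (h : σ → ℕ) : MvPolynomial (σ ⊕ σ) R :=
  ∏ t ∈ F, pairForm a t ^ h t

noncomputable def pairFormExponent (a : σ) (F : Finset σ) (h : σ → ℕ) : σ →₀ ℕ :=
  Finsupp.single a (∑ t ∈ F, h t) + ∑ t ∈ F, Finsupp.single t (h t)

def pairFormProdSet (a : σ) (F : Finset σ) (k : ℕ) : Set (MvPolynomial (σ ⊕ σ) R) :=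
  {f | ∃ h : σ → ℕ, ∑ t ∈ F, h t = k ∧ f = pairFormProd a F h}

noncomputable def eraseInr : MvPolynomial (σ ⊕ σ) R →ₐ[R] MvPolynomial σ R :=
  aeval (Sum.elim X 0)

lemma eraseInr_pairFormProd (a : σ) (F : Finset σ) (h : σ → ℕ) :
    eraseInr (pairFormProd a F h : MvPolynomial (σ ⊕ σ) R) =
      monomial (pairFormExponent a F h) 1 := by
  simp only [pairFormProd, pairFormExponent, pairForm, eraseInr, map_prod, map_pow, map_sub,
    map_mul, aeval_X, Sum.elim_inl, Sum.elim_inr, Pi.zero_apply, mul_zero, sub_zero]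
  rw [← one_mul (1 : R), ← monomial_mul, monomial_sum_one, ← X_pow_eq_monomial,
    ← prod_pow_eq_pow_sum]
  simp only [mul_pow, prod_mul_distrib, X_pow_eq_monomial]

section DecidableEq

variable [DecidableEq σ]

lemma injOn_pairFormExponent {a : σ} {F : Finset σ} (ha : a ∉ F) (k : ℕ) :
    Set.InjOn (pairFormExponent a F) (F.piAntidiag k) := by
  intro h hh h' hh' heq
  rw [mem_coe, mem_piAntidiag] at hh hh'
  funext t
  by_cases ht : t ∈ F
  · have hat : a ≠ t := fun e => ha (e ▸ ht)
    simpa [pairFormExponent, Finsupp.finsetSum_apply, Finsupp.single_apply, hat, ht] using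
      DFunLike.congr_fun heq t
  · rw [not_imp_comm.mp (hh.2 t) ht, not_imp_comm.mp (hh'.2 t) ht]

lemma linearIndepOn_pairFormProd [Nontrivial R] {a : σ} {F : Finset σ} (ha : a ∉ F) (k : ℕ) :
    LinearIndepOn R (pairFormProd (R := R) a F) (F.piAntidiag k : Set (σ → ℕ)) := by
  refine LinearIndepOn.of_comp (eraseInr (R := R)).toLinearMap ?_
  have hcomp : eraseInr.toLinearMap ∘ pairFormProd (R := R) a F =
      basisMonomials σ R ∘ pairFormExponent a F := by
    funext h
    simp [eraseInr_pairFormProd]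
  rw [hcomp]
  exact ((basisMonomials σ R).linearIndependent.linearIndepOn _).comp_of_image
    (injOn_pairFormExponent ha k)

lemma pairFormProdSet_eq_image (a : σ) (F : Finset σ) (k : ℕ) :
    (pairFormProdSet a F k : Set (MvPolynomial (σ ⊕ σ) R)) =
      pairFormProd a F '' (F.piAntidiag k : Set (σ → ℕ)) := by
  ext f
  constructor
  · rintro ⟨h, hk, rfl⟩
    refine ⟨F.piecewise h 0, mem_piAntidiag.2 ⟨?_, fun t ht => ?_⟩, ?_⟩
    · rw [← hk]
      exact sum_congr rfl fun t ht => piecewise_eq_of_mem _ _ _ ht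
    · by_contra hF
      exact ht (piecewise_eq_of_notMem _ _ _ hF)
    · exact prod_congr rfl fun t ht => by rw [piecewise_eq_of_mem _ _ _ ht]
  · rintro ⟨h, hh, rfl⟩
    exact ⟨h, (mem_piAntidiag.1 hh).1, rfl⟩

end DecidableEq

lemma linearIndepOn_pairFormProdSet [Nontrivial R] {a : σ} {F : Finset σ} (ha : a ∉ F) (k : ℕ) :
    LinearIndepOn R id (pairFormProdSet (R := R) a F k) := by
  classical
  rw [pairFormProdSet_eq_image]
  exact (linearIndepOn_pairFormProd ha k).id_image

lemma finrank_span_pairFormProdSet {K : Type*} [Field K] {a : σ} {F : Finset σ} (ha : a ∉ F)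
    (k : ℕ) : finrank K (span K (pairFormProdSet (R := K) a F k)) = (#F + k - 1).choose k := by
  classical
  have hli := linearIndepOn_pairFormProd (R := K) ha k
  rw [pairFormProdSet_eq_image, ← coe_image, finrank_span_finset_eq_card (by
    rw [coe_image]; exact hli.id_image), card_image_of_injOn hli.injOn,
    card_piAntidiag_nat_eq_choose]

lemma finrank_span_pairFormProdSet_univ_erase {K : Type*} [Field K] {n : ℕ} (hn : 2 ≤ n)
    (a : Fin n) (k : ℕ) :
    finrank K (span K (pairFormProdSet (R := K) a (univ.erase a) k)) = (n - 2 + k).choose k := by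
  rw [finrank_span_pairFormProdSet (notMem_erase a univ), card_erase_of_mem (mem_univ a),
    card_univ, Fintype.card_fin]
  congr 1
  omega

end PairForm

lemma S1_eq_pairFormProdSet (n k : ℕ) (hn : 2 ≤ n) :
    S1 n k hn = pairFormProdSet (⟨0, by omega⟩ : Fin n) (univ.erase ⟨0, by omega⟩) k := by
  have hF : univ.filter (fun t : Fin n => 0 < t.val) = univ.erase ⟨0, by omega⟩ := by
    ext t
    simp [Fin.ext_iff, Nat.pos_iff_ne_zero]
  rw [S1, hF]
  rfl

lemma S2_eq_pairFormProdSet (n k : ℕ) (hn : 2 ≤ n) :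
    S2 n k hn = pairFormProdSet (⟨n - 1, by omega⟩ : Fin n) (univ.erase ⟨n - 1, by omega⟩) k := by
  have hF : univ.filter (fun t : Fin n => t.val < n - 1) = univ.erase ⟨n - 1, by omega⟩ := by
    ext t
    simp only [mem_filter, mem_univ, true_and, mem_erase, ne_eq, and_true, Fin.ext_iff]
    have := t.isLt
    omega
  have hform : ∀ i : Fin n, xv i * xv (⟨n - 1, by omega⟩ : Fin n) - yv i * yv ⟨n - 1, by omega⟩ =
      pairForm ⟨n - 1, by omega⟩ i := fun i => pairForm_comm i _
  rw [S2, hF]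
  simp only [hform]
  rfl

theorem stmt_1 (n : ℕ) (hn : 2 ≤ n) (k : ℕ) :
    (LinearIndependent ℝ ((↑) : S1 n k hn → MvPolynomial (Fin n ⊕ Fin n) ℝ) ∧
      Module.finrank ℝ (Submodule.span ℝ (S1 n k hn)) = Nat.choose (n - 2 + k) k) ∧
    (LinearIndependent ℝ ((↑) : S2 n k hn → MvPolynomial (Fin n ⊕ Fin n) ℝ) ∧
      Module.finrank ℝ (Submodule.span ℝ (S2 n k hn)) = Nat.choose (n - 2 + k) k) := by
  rw [S1_eq_pairFormProdSet, S2_eq_pairFormProdSet]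
  exact ⟨⟨linearIndepOn_pairFormProdSet (notMem_erase _ _) k,
      finrank_span_pairFormProdSet_univ_erase hn _ k⟩,
    ⟨linearIndepOn_pairFormProdSet (notMem_erase _ _) k,
      finrank_span_pairFormProdSet_univ_erase hn _ k⟩⟩
end

section
/- Let n ≥ 2 and 1 ≤ n₁ < n be integers and k ∈ ℕ. In B = ℝ[x₁,…,xₙ,y₁,…,yₙ], let N_k be the set of all products ∏_{1≤i≤n₁, n₁+1≤t≤n} (x_i·x_t − y_i·y_t)^{h_{it}} with natural numbers h_{it} summing to k, and let P_k be the set of all products ∏_{1≤i≤n₁, n₁+1≤t≤n} (x_i·x_t)^{p_{it}} · ∏_{1≤i≤n₁, n₁+1≤t≤n} (y_i·y_t)^{q_{it}} with natural numbers p_{it}, q_{it} satisfying ∑ p_{it} + ∑ q_{it} = k. Then span N_k ⊆ span P_k, and there exists a real constant C > 0 such that dim span P_k ≤ C·k^{2n−3} for all k ≥ 1; consequently dim span N_k ≤ C·k^{2n−3} for all k ≥ 1. -/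
open MvPolynomial

/-- The set N_k of products ∏ (x_i x_t − y_i y_t)^{h_{it}} over tuples with ∑ h_{it} = k,
where (0-based) i ranges over indices with i.val < n₁ (i.e. 1 ≤ i ≤ n₁) and t over indices
with n₁ ≤ t.val (i.e. n₁+1 ≤ t ≤ n). x-variables are `Sum.inl`, y-variables `Sum.inr`. -/
def Nset (n n₁ k : ℕ) : Set (MvPolynomial (Fin n ⊕ Fin n) ℝ) :=
  {f | ∃ h : Fin n → Fin n → ℕ,
    (∑ i ∈ Finset.univ.filter (fun i : Fin n => i.val < n₁),
      ∑ t ∈ Finset.univ.filter (fun t : Fin n => n₁ ≤ t.val), h i t) = k ∧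
    f = ∏ i ∈ Finset.univ.filter (fun i : Fin n => i.val < n₁),
        ∏ t ∈ Finset.univ.filter (fun t : Fin n => n₁ ≤ t.val),
          (X (Sum.inl i) * X (Sum.inl t) - X (Sum.inr i) * X (Sum.inr t)) ^ h i t}

/-- The set P_k of products ∏ (x_i x_t)^{p_{it}} · ∏ (y_i y_t)^{q_{it}} over tuples with
∑ p_{it} + ∑ q_{it} = k, same index ranges as in `Nset`. -/
def Pset (n n₁ k : ℕ) : Set (MvPolynomial (Fin n ⊕ Fin n) ℝ) :=
  {f | ∃ p q : Fin n → Fin n → ℕ,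
    ((∑ i ∈ Finset.univ.filter (fun i : Fin n => i.val < n₁),
        ∑ t ∈ Finset.univ.filter (fun t : Fin n => n₁ ≤ t.val), p i t) +
      (∑ i ∈ Finset.univ.filter (fun i : Fin n => i.val < n₁),
        ∑ t ∈ Finset.univ.filter (fun t : Fin n => n₁ ≤ t.val), q i t)) = k ∧
    f = (∏ i ∈ Finset.univ.filter (fun i : Fin n => i.val < n₁),
          ∏ t ∈ Finset.univ.filter (fun t : Fin n => n₁ ≤ t.val),
            (X (Sum.inl i) * X (Sum.inl t)) ^ p i t) *
        (∏ i ∈ Finset.univ.filter (fun i : Fin n => i.val < n₁),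
          ∏ t ∈ Finset.univ.filter (fun t : Fin n => n₁ ≤ t.val),
            (X (Sum.inr i) * X (Sum.inr t)) ^ q i t)}

section SpanHelpers
variable {R : Type*} [CommRing R] [Algebra ℝ R]

lemma aux_mul_mem_span {S U : Set R} {x c : R}
    (hx : x ∈ Submodule.span ℝ S) (h : ∀ w ∈ S, w * c ∈ Submodule.span ℝ U) :
    x * c ∈ Submodule.span ℝ U := by
  induction hx using Submodule.span_induction with
  | mem w hw => exact h w hw
  | zero => simpa using Submodule.zero_mem _
  | add a b _ _ ha hb => rw [add_mul]; exact add_mem ha hb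
  | smul r a _ ha => rw [smul_mul_assoc]; exact Submodule.smul_mem _ _ ha

lemma aux_mul_mem_span₂ {S T U : Set R} {x y : R}
    (hx : x ∈ Submodule.span ℝ S) (hy : y ∈ Submodule.span ℝ T)
    (h : ∀ s ∈ S, ∀ t ∈ T, s * t ∈ Submodule.span ℝ U) :
    x * y ∈ Submodule.span ℝ U := by
  induction hy using Submodule.span_induction with
  | mem w hw => exact aux_mul_mem_span hx (fun s hs => h s hs w hw)
  | zero => simpa using Submodule.zero_mem _
  | add a b _ _ ha hb => rw [mul_add]; exact add_mem ha hb
  | smul r a _ ha => rw [mul_smul_comm]; exact Submodule.smul_mem _ _ ha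

lemma aux_pow_mem (u v : R) (m : ℕ) :
    (u - v) ^ m ∈ Submodule.span ℝ {w | ∃ p q : ℕ, p + q = m ∧ w = u ^ p * v ^ q} := by
  induction m with
  | zero => exact Submodule.subset_span ⟨0, 0, rfl, by simp⟩
  | succ m ih =>
      have key : ∀ w ∈ {w | ∃ p q : ℕ, p + q = m ∧ w = u ^ p * v ^ q},
          w * (u - v) ∈ Submodule.span ℝ {w | ∃ p q : ℕ, p + q = m + 1 ∧ w = u ^ p * v ^ q} := by
        rintro w ⟨p, q, hpq, rfl⟩
        have h1 : u ^ p * v ^ q * (u - v) = u ^ (p + 1) * v ^ q - u ^ p * v ^ (q + 1) := by ring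
        rw [h1]
        exact sub_mem (Submodule.subset_span ⟨p + 1, q, by omega, rfl⟩)
          (Submodule.subset_span ⟨p, q + 1, by omega, rfl⟩)
      have := aux_mul_mem_span ih key
      rwa [← pow_succ] at this

lemma aux_prod_mem {ι : Type*} [DecidableEq ι] (s : Finset ι) (u v : ι → R) (P : ι → ℕ) :
    (∏ z ∈ s, (u z - v z) ^ P z) ∈ Submodule.span ℝ
      {w | ∃ p q : ι → ℕ, (∀ z ∈ s, p z + q z = P z) ∧
        w = ∏ z ∈ s, (u z ^ p z * v z ^ q z)} := by
  induction s using Finset.cons_induction with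
  | empty => exact Submodule.subset_span ⟨0, 0, by simp, by simp⟩
  | cons a s ha ih =>
      rw [Finset.prod_cons]
      refine aux_mul_mem_span₂ (aux_pow_mem (u a) (v a) (P a)) ih ?_
      rintro w₁ ⟨p₀, q₀, h₀, rfl⟩ w₂ ⟨p, q, hpq, rfl⟩
      refine Submodule.subset_span ⟨Function.update p a p₀, Function.update q a q₀, ?_, ?_⟩
      · intro z hz
        rcases Finset.mem_cons.1 hz with rfl | hz
        · simp [h₀]
        · have hz' : z ≠ a := fun h => ha (h ▸ hz)
          simp [Function.update_of_ne hz', hpq z hz]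
      · rw [Finset.prod_cons, Function.update_self, Function.update_self]
        congr 1
        refine Finset.prod_congr rfl fun z hz => ?_
        have hz' : z ≠ a := fun h => ha (h ▸ hz)
        rw [Function.update_of_ne hz', Function.update_of_ne hz']

end SpanHelpers

lemma part1 (n n₁ k : ℕ) :
    Submodule.span ℝ (Nset n n₁ k) ≤ Submodule.span ℝ (Pset n n₁ k) := by
  classical
  rw [Submodule.span_le]
  rintro f ⟨h, hsum, rfl⟩
  set A : Finset (Fin n) := Finset.univ.filter (fun i : Fin n => i.val < n₁) with hA
  set B : Finset (Fin n) := Finset.univ.filter (fun t : Fin n => n₁ ≤ t.val) with hB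
  have hrw : (∏ i ∈ A, ∏ t ∈ B,
      ((X (Sum.inl i) * X (Sum.inl t) : MvPolynomial (Fin n ⊕ Fin n) ℝ)
        - X (Sum.inr i) * X (Sum.inr t)) ^ h i t)
      = ∏ z ∈ A ×ˢ B,
        ((X (Sum.inl z.1) * X (Sum.inl z.2) : MvPolynomial (Fin n ⊕ Fin n) ℝ)
          - X (Sum.inr z.1) * X (Sum.inr z.2)) ^ h z.1 z.2 :=
    (Finset.prod_product' A B fun i t =>
      ((X (Sum.inl i) * X (Sum.inl t) : MvPolynomial (Fin n ⊕ Fin n) ℝ)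
        - X (Sum.inr i) * X (Sum.inr t)) ^ h i t).symm
  rw [SetLike.mem_coe, hrw]
  have hmem := aux_prod_mem (A ×ˢ B)
    (fun z : Fin n × Fin n => (X (Sum.inl z.1) * X (Sum.inl z.2) : MvPolynomial (Fin n ⊕ Fin n) ℝ))
    (fun z => X (Sum.inr z.1) * X (Sum.inr z.2)) (fun z => h z.1 z.2)
  refine Submodule.span_le.2 ?_ hmem
  rintro w ⟨p, q, hpq, rfl⟩
  apply Submodule.subset_span
  have e1 : ∀ r : Fin n × Fin n → ℕ, (∑ i ∈ A, ∑ t ∈ B,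
      (if (i, t) ∈ A ×ˢ B then r (i, t) else 0)) = ∑ z ∈ A ×ˢ B, r z := by
    intro r
    rw [← Finset.sum_product' A B fun i t => if (i, t) ∈ A ×ˢ B then r (i, t) else 0]
    exact Finset.sum_congr rfl fun z hz => by
      rw [show ((z.1, z.2) : Fin n × Fin n) = z from rfl, if_pos hz]
  have e2 : ∀ (c : Fin n → Fin n ⊕ Fin n) (r : Fin n × Fin n → ℕ), (∏ i ∈ A, ∏ t ∈ B,
      ((X (c i) * X (c t) : MvPolynomial (Fin n ⊕ Fin n) ℝ))
        ^ (if (i, t) ∈ A ×ˢ B then r (i, t) else 0)) = ∏ z ∈ A ×ˢ B, (X (c z.1) * X (c z.2)) ^ r z := by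
    intro c r
    rw [← Finset.prod_product' A B]
    exact Finset.prod_congr rfl fun z hz => by
      rw [show ((z.1, z.2) : Fin n × Fin n) = z from rfl, if_pos hz]
  refine ⟨fun i t => if (i, t) ∈ A ×ˢ B then p (i, t) else 0,
          fun i t => if (i, t) ∈ A ×ˢ B then q (i, t) else 0, ?_, ?_⟩
  · rw [e1 p, e1 q, ← Finset.sum_add_distrib, ← hsum,
      ← Finset.sum_product' A B fun i t => h i t]
    exact Finset.sum_congr rfl hpq
  · rw [e2 Sum.inl p, e2 Sum.inr q, ← Finset.prod_mul_distrib]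

namespace Part2

variable (n n₁ : ℕ)

def Af : Finset (Fin n) := Finset.univ.filter (fun i => i.val < n₁)
def Bf : Finset (Fin n) := Finset.univ.filter (fun t => n₁ ≤ t.val)

lemma Af_def : Finset.univ.filter (fun i : Fin n => i.val < n₁) = Af n n₁ := rfl
lemma Bf_def : Finset.univ.filter (fun t : Fin n => n₁ ≤ t.val) = Bf n n₁ := rfl

lemma mem_Af {i : Fin n} : i ∈ Af n n₁ ↔ i.val < n₁ := by simp [Af]
lemma mem_Bf {t : Fin n} : t ∈ Bf n n₁ ↔ n₁ ≤ t.val := by simp [Bf]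

/-- linear functional summing coordinates -/
def L (s : Finset (Fin n)) (c : Fin n → Fin n ⊕ Fin n) : ((Fin n ⊕ Fin n) →₀ ℕ) →+ ℕ where
  toFun d := ∑ j ∈ s, d (c j)
  map_zero' := by simp
  map_add' d e := by simp [Finset.sum_add_distrib]

lemma L_single (s : Finset (Fin n)) (c : Fin n → Fin n ⊕ Fin n) (x : Fin n ⊕ Fin n) (m : ℕ) :
    L n s c (Finsupp.single x m) = ∑ j ∈ s, if x = c j then m else 0 := by
  simp [L, Finsupp.single_apply]

lemma L_dXY (s : Finset (Fin n)) (c g g' : Fin n → Fin n ⊕ Fin n) (r : Fin n → Fin n → ℕ) :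
    L n s c (∑ i ∈ Af n n₁, ∑ t ∈ Bf n n₁,
        r i t • (Finsupp.single (g i) 1 + Finsupp.single (g' t) 1))
      = ∑ i ∈ Af n n₁, ∑ t ∈ Bf n n₁, r i t *
        ((∑ j ∈ s, if g i = c j then 1 else 0) + (∑ j ∈ s, if g' t = c j then 1 else 0)) := by
  rw [map_sum]
  refine Finset.sum_congr rfl fun i _ => ?_
  rw [map_sum]
  refine Finset.sum_congr rfl fun t _ => ?_
  rw [map_nsmul, map_add, L_single, L_single, smul_eq_mul]

lemma L_eval_A (c : Fin n → Fin n ⊕ Fin n) (hc : Function.Injective c) (r : Fin n → Fin n → ℕ) :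
    L n (Af n n₁) c (∑ i ∈ Af n n₁, ∑ t ∈ Bf n n₁,
        r i t • (Finsupp.single (c i) 1 + Finsupp.single (c t) 1))
      = ∑ i ∈ Af n n₁, ∑ t ∈ Bf n n₁, r i t := by
  rw [L_dXY]
  refine Finset.sum_congr rfl fun i hi => Finset.sum_congr rfl fun t ht => ?_
  have h1 : (∑ j ∈ Af n n₁, if c i = c j then 1 else 0) = 1 := by
    simp only [hc.eq_iff]
    rw [Finset.sum_ite_eq]
    simp [hi]
  have h2 : (∑ j ∈ Af n n₁, if c t = c j then 1 else 0) = 0 := by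
    refine Finset.sum_eq_zero fun j hj => if_neg fun hcontra => ?_
    have := hc hcontra
    rw [mem_Af] at hj
    rw [mem_Bf] at ht
    omega
  rw [h1, h2]
  ring

lemma L_eval_B (c : Fin n → Fin n ⊕ Fin n) (hc : Function.Injective c) (r : Fin n → Fin n → ℕ) :
    L n (Bf n n₁) c (∑ i ∈ Af n n₁, ∑ t ∈ Bf n n₁,
        r i t • (Finsupp.single (c i) 1 + Finsupp.single (c t) 1))
      = ∑ i ∈ Af n n₁, ∑ t ∈ Bf n n₁, r i t := by
  rw [L_dXY]
  refine Finset.sum_congr rfl fun i hi => Finset.sum_congr rfl fun t ht => ?_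
  have h1 : (∑ j ∈ Bf n n₁, if c i = c j then 1 else 0) = 0 := by
    refine Finset.sum_eq_zero fun j hj => if_neg fun hcontra => ?_
    have := hc hcontra
    rw [mem_Bf] at hj
    rw [mem_Af] at hi
    omega
  have h2 : (∑ j ∈ Bf n n₁, if c t = c j then 1 else 0) = 1 := by
    simp only [hc.eq_iff]
    rw [Finset.sum_ite_eq]
    simp [ht]
  rw [h1, h2]
  ring

lemma L_eval_zero (s : Finset (Fin n)) (c c' : Fin n → Fin n ⊕ Fin n)
    (h : ∀ x y, c x ≠ c' y) (r : Fin n → Fin n → ℕ) :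
    L n s c' (∑ i ∈ Af n n₁, ∑ t ∈ Bf n n₁,
        r i t • (Finsupp.single (c i) 1 + Finsupp.single (c t) 1)) = 0 := by
  rw [L_dXY]
  refine Finset.sum_eq_zero fun i _ => Finset.sum_eq_zero fun t _ => ?_
  have h1 : (∑ j ∈ s, if c i = c' j then 1 else 0) = 0 :=
    Finset.sum_eq_zero fun j _ => if_neg (h i j)
  have h2 : (∑ j ∈ s, if c t = c' j then 1 else 0) = 0 :=
    Finset.sum_eq_zero fun j _ => if_neg (h t j)
  rw [h1, h2]
  ring

/-- the degree set -/
def Dk (k : ℕ) : Set ((Fin n ⊕ Fin n) →₀ ℕ) :=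
  {d | (∑ j ∈ Af n n₁, d (Sum.inl j)) + (∑ j ∈ Af n n₁, d (Sum.inr j)) = k ∧
       (∑ j ∈ Af n n₁, d (Sum.inl j)) = (∑ j ∈ Bf n n₁, d (Sum.inl j)) ∧
       (∑ j ∈ Af n n₁, d (Sum.inr j)) = (∑ j ∈ Bf n n₁, d (Sum.inr j))}

lemma prod_monomial_one {ι : Type*} (s : Finset ι) (f : ι → ((Fin n ⊕ Fin n) →₀ ℕ)) :
    (∏ i ∈ s, (monomial (f i) (1 : ℝ))) = monomial (∑ i ∈ s, f i) 1 := by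
  classical
  induction s using Finset.cons_induction with
  | empty => simp
  | cons a s ha ih =>
      rw [Finset.prod_cons, Finset.sum_cons, ih, monomial_mul, one_mul]

lemma XX_pow (a b : Fin n ⊕ Fin n) (e : ℕ) :
    ((X a * X b : MvPolynomial (Fin n ⊕ Fin n) ℝ)) ^ e
      = monomial (e • (Finsupp.single a 1 + Finsupp.single b 1)) 1 := by
  rw [mul_pow, X_pow_eq_monomial, X_pow_eq_monomial, monomial_mul, one_mul,
    smul_add, Finsupp.smul_single, Finsupp.smul_single, smul_eq_mul, mul_one]

lemma prod_XX (c : Fin n → Fin n ⊕ Fin n) (r : Fin n → Fin n → ℕ) :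
    (∏ i ∈ Af n n₁, ∏ t ∈ Bf n n₁, ((X (c i) * X (c t) : MvPolynomial (Fin n ⊕ Fin n) ℝ)) ^ r i t)
      = monomial (∑ i ∈ Af n n₁, ∑ t ∈ Bf n n₁,
          r i t • (Finsupp.single (c i) 1 + Finsupp.single (c t) 1)) 1 := by
  rw [← prod_monomial_one]
  refine Finset.prod_congr rfl fun i _ => ?_
  rw [← prod_monomial_one]
  exact Finset.prod_congr rfl fun t _ => XX_pow n (c i) (c t) (r i t)

lemma Pset_monomial {k : ℕ} {f : MvPolynomial (Fin n ⊕ Fin n) ℝ} (hf : f ∈ Pset n n₁ k) :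
    ∃ d ∈ Dk n n₁ k, f = monomial d 1 := by
  obtain ⟨p, q, hsum, rfl⟩ := hf
  set dX : (Fin n ⊕ Fin n) →₀ ℕ := ∑ i ∈ Af n n₁, ∑ t ∈ Bf n n₁,
      p i t • (Finsupp.single (Sum.inl i) 1 + Finsupp.single (Sum.inl t) 1) with hdX
  set dY : (Fin n ⊕ Fin n) →₀ ℕ := ∑ i ∈ Af n n₁, ∑ t ∈ Bf n n₁,
      q i t • (Finsupp.single (Sum.inr i) 1 + Finsupp.single (Sum.inr t) 1) with hdY
  have hinl : Function.Injective (Sum.inl : Fin n → Fin n ⊕ Fin n) := Sum.inl_injective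
  have hinr : Function.Injective (Sum.inr : Fin n → Fin n ⊕ Fin n) := Sum.inr_injective
  have hne : ∀ x y : Fin n, (Sum.inr x : Fin n ⊕ Fin n) ≠ Sum.inl y := by simp
  have hne' : ∀ x y : Fin n, (Sum.inl x : Fin n ⊕ Fin n) ≠ Sum.inr y := by simp
  refine ⟨dX + dY, ⟨?_, ?_, ?_⟩, ?_⟩
  · show L n (Af n n₁) Sum.inl (dX + dY) + L n (Af n n₁) Sum.inr (dX + dY) = k
    rw [map_add, map_add, hdX, hdY,
      L_eval_A n n₁ Sum.inl hinl p,
      L_eval_zero n n₁ (Af n n₁) Sum.inr Sum.inl hne q,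
      L_eval_zero n n₁ (Af n n₁) Sum.inl Sum.inr hne' p,
      L_eval_A n n₁ Sum.inr hinr q]
    rw [Af_def, Bf_def] at hsum
    simpa using hsum
  · show L n (Af n n₁) Sum.inl (dX + dY) = L n (Bf n n₁) Sum.inl (dX + dY)
    rw [map_add, map_add, hdX, hdY,
      L_eval_A n n₁ Sum.inl hinl p, L_eval_B n n₁ Sum.inl hinl p,
      L_eval_zero n n₁ (Af n n₁) Sum.inr Sum.inl hne q,
      L_eval_zero n n₁ (Bf n n₁) Sum.inr Sum.inl hne q]
  · show L n (Af n n₁) Sum.inr (dX + dY) = L n (Bf n n₁) Sum.inr (dX + dY)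
    rw [map_add, map_add, hdX, hdY,
      L_eval_A n n₁ Sum.inr hinr q, L_eval_B n n₁ Sum.inr hinr q,
      L_eval_zero n n₁ (Af n n₁) Sum.inl Sum.inr hne' p,
      L_eval_zero n n₁ (Bf n n₁) Sum.inl Sum.inr hne' p]
  · rw [Af_def, Bf_def, prod_XX, prod_XX, monomial_mul, one_mul, hdX, hdY]

lemma Dk_coord_le {k : ℕ} {d : (Fin n ⊕ Fin n) →₀ ℕ} (hd : d ∈ Dk n n₁ k) :
    ∀ x, d x ≤ k := by
  obtain ⟨h1, h2, h3⟩ := hd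
  intro x
  have key : ∀ (s : Finset (Fin n)) (c : Fin n → Fin n ⊕ Fin n) (j : Fin n), j ∈ s →
      d (c j) ≤ ∑ j' ∈ s, d (c j') := fun s c j hj =>
    Finset.single_le_sum (f := fun j' => d (c j')) (fun _ _ => Nat.zero_le _) hj
  rcases x with j | j
  · rcases lt_or_ge j.val n₁ with hj | hj
    · have := key (Af n n₁) Sum.inl j ((mem_Af n n₁).2 hj); omega
    · have := key (Bf n n₁) Sum.inl j ((mem_Bf n n₁).2 hj); omega
  · rcases lt_or_ge j.val n₁ with hj | hj
    · have := key (Af n n₁) Sum.inr j ((mem_Af n n₁).2 hj); omega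
    · have := key (Bf n n₁) Sum.inr j ((mem_Bf n n₁).2 hj); omega

/-- the three "redundant" coordinates -/
def Ef (hn : 2 ≤ n) (h1 : 1 ≤ n₁) (h2 : n₁ < n) : Finset (Fin n ⊕ Fin n) :=
  Finset.univ \ {Sum.inl (⟨0, by omega⟩ : Fin n), Sum.inl (⟨n₁, h2⟩ : Fin n),
    Sum.inr (⟨n₁, h2⟩ : Fin n)}

lemma Ef_card (hn : 2 ≤ n) (h1 : 1 ≤ n₁) (h2 : n₁ < n) : (Ef n n₁ hn h1 h2).card = 2 * n - 3 := by
  rw [Ef, Finset.card_sdiff_of_subset (Finset.subset_univ _), Finset.card_univ]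
  have h3 : ({Sum.inl (⟨0, by omega⟩ : Fin n), Sum.inl (⟨n₁, h2⟩ : Fin n),
      Sum.inr (⟨n₁, h2⟩ : Fin n)} : Finset (Fin n ⊕ Fin n)).card = 3 := by
    rw [Finset.card_insert_of_notMem, Finset.card_insert_of_notMem, Finset.card_singleton]
    · simp
    · simp [Fin.ext_iff]
      omega
  rw [h3]
  simp only [Fintype.card_sum, Fintype.card_fin]
  omega

lemma Dk_inj (hn : 2 ≤ n) (h1 : 1 ≤ n₁) (h2 : n₁ < n) {k : ℕ} :
    Set.InjOn (fun (d : (Fin n ⊕ Fin n) →₀ ℕ) (x : (Ef n n₁ hn h1 h2 : Finset (Fin n ⊕ Fin n))) =>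
      (⟨min (d x.1) k, Nat.lt_succ_of_le (min_le_right _ _)⟩ : Fin (k + 1))) (Dk n n₁ k) := by
  intro d₁ hd₁ d₂ hd₂ heq
  have hE : ∀ x ∈ Ef n n₁ hn h1 h2, d₁ x = d₂ x := by
    intro x hx
    have := congrFun heq ⟨x, hx⟩
    simp only [Fin.mk.injEq] at this
    rwa [min_eq_left (Dk_coord_le n n₁ hd₁ x), min_eq_left (Dk_coord_le n n₁ hd₂ x)] at this
  set i₀ : Fin n := ⟨0, by omega⟩ with hi₀
  set t₀ : Fin n := ⟨n₁, h2⟩ with ht₀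
  have hmemE : ∀ x : Fin n ⊕ Fin n,
      x ≠ Sum.inl i₀ → x ≠ Sum.inl t₀ → x ≠ Sum.inr t₀ → x ∈ Ef n n₁ hn h1 h2 := by
    intro x hx1 hx2 hx3
    simp [Ef, hx1, hx2, hx3]
    exact ⟨hx1, hx2, hx3⟩
  have hi₀A : i₀ ∈ Af n n₁ := (mem_Af n n₁).2 (by simp [hi₀]; omega)
  have ht₀B : t₀ ∈ Bf n n₁ := (mem_Bf n n₁).2 (by simp [ht₀])
  -- sums over pieces agree
  have hcA : ∀ j ∈ Af n n₁, (Sum.inr j : Fin n ⊕ Fin n) ∈ Ef n n₁ hn h1 h2 := by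
    intro j hj
    rw [mem_Af] at hj
    refine hmemE _ (by simp) (by simp) ?_
    simp only [ne_eq, Sum.inr.injEq, Fin.ext_iff, ht₀]
    omega
  have hc : (∑ j ∈ Af n n₁, d₁ (Sum.inr j)) = ∑ j ∈ Af n n₁, d₂ (Sum.inr j) :=
    Finset.sum_congr rfl fun j hj => hE _ (hcA j hj)
  have heAi : ∀ j ∈ (Af n n₁).erase i₀, (Sum.inl j : Fin n ⊕ Fin n) ∈ Ef n n₁ hn h1 h2 := by
    intro j hj
    rw [Finset.mem_erase, mem_Af] at hj
    refine hmemE _ (by simp [hj.1]) ?_ (by simp)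
    simp only [ne_eq, Sum.inl.injEq, Fin.ext_iff, ht₀]
    omega
  have heA : (∑ j ∈ (Af n n₁).erase i₀, d₁ (Sum.inl j))
      = ∑ j ∈ (Af n n₁).erase i₀, d₂ (Sum.inl j) :=
    Finset.sum_congr rfl fun j hj => hE _ (heAi j hj)
  have heBli : ∀ j ∈ (Bf n n₁).erase t₀, (Sum.inl j : Fin n ⊕ Fin n) ∈ Ef n n₁ hn h1 h2 := by
    intro j hj
    rw [Finset.mem_erase, mem_Bf] at hj
    refine hmemE _ ?_ (by simp [hj.1]) (by simp)
    simp only [ne_eq, Sum.inl.injEq, Fin.ext_iff, hi₀]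
    omega
  have heBl : (∑ j ∈ (Bf n n₁).erase t₀, d₁ (Sum.inl j))
      = ∑ j ∈ (Bf n n₁).erase t₀, d₂ (Sum.inl j) :=
    Finset.sum_congr rfl fun j hj => hE _ (heBli j hj)
  have heBri : ∀ j ∈ (Bf n n₁).erase t₀, (Sum.inr j : Fin n ⊕ Fin n) ∈ Ef n n₁ hn h1 h2 := by
    intro j hj
    rw [Finset.mem_erase, mem_Bf] at hj
    exact hmemE _ (by simp) (by simp) (by simp [hj.1])
  have heBr : (∑ j ∈ (Bf n n₁).erase t₀, d₁ (Sum.inr j))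
      = ∑ j ∈ (Bf n n₁).erase t₀, d₂ (Sum.inr j) :=
    Finset.sum_congr rfl fun j hj => hE _ (heBri j hj)
  -- split sums
  have splitA : ∀ d : (Fin n ⊕ Fin n) →₀ ℕ, (∑ j ∈ Af n n₁, d (Sum.inl j))
      = d (Sum.inl i₀) + ∑ j ∈ (Af n n₁).erase i₀, d (Sum.inl j) :=
    fun d => (Finset.add_sum_erase _ _ hi₀A).symm
  have splitBl : ∀ d : (Fin n ⊕ Fin n) →₀ ℕ, (∑ j ∈ Bf n n₁, d (Sum.inl j))
      = d (Sum.inl t₀) + ∑ j ∈ (Bf n n₁).erase t₀, d (Sum.inl j) :=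
    fun d => (Finset.add_sum_erase _ _ ht₀B).symm
  have splitBr : ∀ d : (Fin n ⊕ Fin n) →₀ ℕ, (∑ j ∈ Bf n n₁, d (Sum.inr j))
      = d (Sum.inr t₀) + ∑ j ∈ (Bf n n₁).erase t₀, d (Sum.inr j) :=
    fun d => (Finset.add_sum_erase _ _ ht₀B).symm
  obtain ⟨c11, c12, c13⟩ := hd₁
  obtain ⟨c21, c22, c23⟩ := hd₂
  rw [splitA d₁] at c11 c12
  rw [splitA d₂] at c21 c22
  rw [splitBl d₁] at c12
  rw [splitBl d₂] at c22
  rw [splitBr d₁] at c13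
  rw [splitBr d₂] at c23
  have e1 : d₁ (Sum.inl i₀) = d₂ (Sum.inl i₀) := by omega
  have e2 : d₁ (Sum.inl t₀) = d₂ (Sum.inl t₀) := by omega
  have e3 : d₁ (Sum.inr t₀) = d₂ (Sum.inr t₀) := by omega
  ext x
  by_cases hx : x ∈ Ef n n₁ hn h1 h2
  · exact hE x hx
  · simp only [Ef, Finset.mem_sdiff, Finset.mem_univ, true_and, not_not,
      Finset.mem_insert, Finset.mem_singleton] at hx
    rcases hx with rfl | rfl | rfl
    · exact e1
    · exact e2
    · exact e3

lemma Pset_card (hn : 2 ≤ n) (h1 : 1 ≤ n₁) (h2 : n₁ < n) (k : ℕ) :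
    ∃ F : Finset (MvPolynomial (Fin n ⊕ Fin n) ℝ),
      Pset n n₁ k ⊆ ↑F ∧ F.card ≤ (k + 1) ^ (2 * n - 3) := by
  classical
  have hfinD : (Dk n n₁ k).Finite :=
    Set.Finite.of_finite_image (Set.toFinite _) (Dk_inj n n₁ hn h1 h2)
  have hfin : ((fun d : (Fin n ⊕ Fin n) →₀ ℕ => (monomial d (1 : ℝ))) '' Dk n n₁ k).Finite :=
    hfinD.image _
  refine ⟨hfin.toFinset, ?_, ?_⟩
  · intro f hf
    obtain ⟨d, hd, rfl⟩ := Pset_monomial n n₁ hf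
    rw [Finset.mem_coe, Set.Finite.mem_toFinset]
    exact ⟨d, hd, rfl⟩
  · calc hfin.toFinset.card
        = ((fun d : (Fin n ⊕ Fin n) →₀ ℕ => (monomial d (1 : ℝ))) '' Dk n n₁ k).ncard :=
          (Set.ncard_eq_toFinset_card _ hfin).symm
      _ ≤ (Dk n n₁ k).ncard := Set.ncard_image_le hfinD
      _ = ((fun (d : (Fin n ⊕ Fin n) →₀ ℕ)
              (x : (Ef n n₁ hn h1 h2 : Finset (Fin n ⊕ Fin n))) =>
            (⟨min (d x.1) k, Nat.lt_succ_of_le (min_le_right _ _)⟩ : Fin (k + 1)))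
              '' Dk n n₁ k).ncard :=
          (Set.ncard_image_of_injOn (Dk_inj n n₁ hn h1 h2)).symm
      _ ≤ (Set.univ : Set ({x // x ∈ Ef n n₁ hn h1 h2} → Fin (k + 1))).ncard :=
          Set.ncard_le_ncard (Set.subset_univ _) (Set.toFinite _)
      _ = (k + 1) ^ (2 * n - 3) := by
          rw [Set.ncard_univ, Nat.card_eq_fintype_card, Fintype.card_fun, Fintype.card_coe,
            Fintype.card_fin, Ef_card n n₁ hn h1 h2]

end Part2

theorem stmt_5 (n n₁ : ℕ) (hn : 2 ≤ n) (h1 : 1 ≤ n₁) (h2 : n₁ < n) :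
    (∀ k : ℕ, Submodule.span ℝ (Nset n n₁ k) ≤ Submodule.span ℝ (Pset n n₁ k)) ∧
    ∃ C : ℝ, 0 < C ∧ ∀ k : ℕ, 1 ≤ k →
      (Module.finrank ℝ (Submodule.span ℝ (Pset n n₁ k)) : ℝ) ≤ C * (k : ℝ) ^ (2 * n - 3) ∧
      (Module.finrank ℝ (Submodule.span ℝ (Nset n n₁ k)) : ℝ) ≤ C * (k : ℝ) ^ (2 * n - 3) := by
  classical
  constructor
  · exact fun k => part1 n n₁ k
  · refine ⟨(2 : ℝ) ^ (2 * n - 3), by positivity, fun k hk => ?_⟩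
    obtain ⟨F, hsub, hcard⟩ := Part2.Pset_card n n₁ hn h1 h2 k
    have hle : Submodule.span ℝ (Pset n n₁ k)
        ≤ Submodule.span ℝ (F : Set (MvPolynomial (Fin n ⊕ Fin n) ℝ)) :=
      Submodule.span_mono hsub
    haveI hfd : FiniteDimensional ℝ (Submodule.span ℝ (Pset n n₁ k)) :=
      Submodule.finiteDimensional_of_le hle
    have hP : Module.finrank ℝ (Submodule.span ℝ (Pset n n₁ k)) ≤ (k + 1) ^ (2 * n - 3) :=
      (Submodule.finrank_mono hle).trans ((finrank_span_finset_le_card F).trans hcard)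
    have hN : Module.finrank ℝ (Submodule.span ℝ (Nset n n₁ k))
        ≤ Module.finrank ℝ (Submodule.span ℝ (Pset n n₁ k)) :=
      Submodule.finrank_mono (part1 n n₁ k)
    have hnat : (k + 1) ^ (2 * n - 3) ≤ 2 ^ (2 * n - 3) * k ^ (2 * n - 3) := by
      calc (k + 1) ^ (2 * n - 3) ≤ (2 * k) ^ (2 * n - 3) :=
            Nat.pow_le_pow_left (by omega) _
        _ = 2 ^ (2 * n - 3) * k ^ (2 * n - 3) := mul_pow 2 k _
    constructor
    · exact_mod_cast hP.trans hnat
    · exact_mod_cast (hN.trans hP).trans hnat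
end

section
/- Let n ≥ 2 and n₁, n₂ be integers with 1 ≤ n₁ ≤ n₂ ≤ n−1. For k ∈ ℕ let Q_k be the set of all products ∏_{1≤i≤n₁, n₁+1≤s≤n} (x_i·x_s)^{p_{is}} · ∏_{1≤j≤n₂, n₂+1≤t≤n} (y_j·y_t)^{q_{jt}} over tuples of natural numbers with ∑ p_{is} + ∑ q_{jt} = k. Then there exist real constants c₁, c₂ > 0 and K ∈ ℕ such that c₁·k^{2n−3} ≤ dim span Q_k ≤ c₂·k^{2n−3} for all k ≥ K. -/
open MvPolynomial

/-- The set Q_k of products ∏ (x_i x_s)^{p_{is}} · ∏ (y_j y_t)^{q_{jt}} over tuples with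
∑ p + ∑ q = k, where (0-based) i.val < n₁ means 1 ≤ i ≤ n₁, n₁ ≤ s.val means n₁+1 ≤ s ≤ n,
j.val < n₂ means 1 ≤ j ≤ n₂, and n₂ ≤ t.val means n₂+1 ≤ t ≤ n.
x-variables are `Sum.inl`, y-variables `Sum.inr`. -/
def Qset (n n₁ n₂ k : ℕ) : Set (MvPolynomial (Fin n ⊕ Fin n) ℝ) :=
  {f | ∃ p q : Fin n → Fin n → ℕ,
    ((∑ i ∈ Finset.univ.filter (fun i : Fin n => i.val < n₁),
        ∑ s ∈ Finset.univ.filter (fun s : Fin n => n₁ ≤ s.val), p i s) +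
      (∑ j ∈ Finset.univ.filter (fun j : Fin n => j.val < n₂),
        ∑ t ∈ Finset.univ.filter (fun t : Fin n => n₂ ≤ t.val), q j t)) = k ∧
    f = (∏ i ∈ Finset.univ.filter (fun i : Fin n => i.val < n₁),
          ∏ s ∈ Finset.univ.filter (fun s : Fin n => n₁ ≤ s.val),
            (X (Sum.inl i) * X (Sum.inl s)) ^ p i s) *
        (∏ j ∈ Finset.univ.filter (fun j : Fin n => j.val < n₂),
          ∏ t ∈ Finset.univ.filter (fun t : Fin n => n₂ ≤ t.val),
            (X (Sum.inr j) * X (Sum.inr t)) ^ q j t)}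

/-!
Every element of `Q_k` is a monomial, so `dim span Q_k` is the number of exponent vectors that
occur. The exponent of a product is the pair of weighted degree sequences of two bipartite
multigraphs, across the cuts `{i ≤ n₁} | {s > n₁}` and `{j ≤ n₂} | {t > n₂}`, with `k` edges
in total. On each side of a cut the degrees add up to the number of edges, so a pair of
degree sequences is determined by the edge count of the first graph and by the `2n - 4`
degrees away from one pivot vertex on each side of each cut: at most `(k + 1) ^ (2n - 3)`
pairs. Conversely, a weighted double star (a spanning tree of the complete bipartite graph)
can be read back from its degree sequence, so choosing `2n - 3` weights below
`m ≈ k / (2n + 1)` freely and letting one central weight absorb the rest of `k` yields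
`m ^ (2n - 3)` distinct pairs.
-/

open Finset

section Pivots

variable {ι : Type*} [DecidableEq ι]

theorem apply_eq_of_sum_eq_of_forall_ne {M : Type*} [AddCancelCommMonoid M] {s : Finset ι}
    {a : ι} {f g : ι → M} (ha : a ∈ s) (hs : ∑ v ∈ s, f v = ∑ v ∈ s, g v)
    (h : ∀ v ∈ s, v ≠ a → f v = g v) : f a = g a := by
  rw [← add_sum_erase s f ha, ← add_sum_erase s g ha,
    sum_congr rfl fun v hv => h v (mem_of_mem_erase hv) (ne_of_mem_erase hv)] at hs
  exact add_right_cancel hs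

def pinZero (a b : ι) (x : ι → ℕ) : ι → ℕ := fun v => if v = a ∨ v = b then 0 else x v

theorem apply_eq_of_pinZero_eq {a b v : ι} {x y : ι → ℕ} (h : pinZero a b x = pinZero a b y)
    (hva : v ≠ a) (hvb : v ≠ b) : x v = y v := by
  simpa [pinZero, hva, hvb] using congrFun h v

variable [Fintype ι]

theorem eq_of_sum_eq_of_sum_compl_eq {M : Type*} [AddCancelCommMonoid M] {A : Finset ι}
    {a b : ι} {f g : ι → M} (ha : a ∈ A) (hb : b ∉ A) (hA : ∑ v ∈ A, f v = ∑ v ∈ A, g v)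
    (hAc : ∑ v ∈ Aᶜ, f v = ∑ v ∈ Aᶜ, g v) (h : ∀ v, v ≠ a → v ≠ b → f v = g v) : f = g := by
  funext v
  by_cases hva : v = a
  · subst hva
    exact apply_eq_of_sum_eq_of_forall_ne ha hA fun u hu hua =>
      h u hua (ne_of_mem_of_not_mem hu hb)
  by_cases hvb : v = b
  · subst hvb
    exact apply_eq_of_sum_eq_of_forall_ne (mem_compl.mpr hb) hAc fun u hu hub =>
      h u (fun e => mem_compl.mp hu (e ▸ ha)) hub
  exact h v hva hvb

theorem le_sum_of_sum_compl_eq {A : Finset ι} {x : ι → ℕ}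
    (h : ∑ v ∈ Aᶜ, x v = ∑ v ∈ A, x v) (v : ι) : x v ≤ ∑ v ∈ A, x v := by
  by_cases hv : v ∈ A
  · exact single_le_sum (fun _ _ => Nat.zero_le _) hv
  · rw [← h]
    exact single_le_sum (fun _ _ => Nat.zero_le _) (mem_compl.mpr hv)

def pinnedBox (a b : ι) (M : ℕ) : Finset (ι → ℕ) :=
  Fintype.piFinset fun v => if v = a ∨ v = b then {0} else range M

theorem mem_pinnedBox {a b : ι} {M : ℕ} {w : ι → ℕ} :
    w ∈ pinnedBox a b M ↔ w a = 0 ∧ w b = 0 ∧ ∀ v, v ≠ a → v ≠ b → w v < M := by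
  simp only [pinnedBox, Fintype.mem_piFinset]
  refine ⟨fun h => ⟨by simpa using h a, by simpa using h b, fun v hva hvb => ?_⟩,
    fun ⟨hwa, hwb, hw⟩ v => ?_⟩
  · simpa [hva, hvb] using h v
  · split_ifs with hv
    · rcases hv with rfl | rfl <;> simpa
    · push Not at hv
      simpa using hw v hv.1 hv.2

theorem pinZero_mem_pinnedBox {a b : ι} {M : ℕ} {x : ι → ℕ} (hx : ∀ v, x v < M) :
    pinZero a b x ∈ pinnedBox a b M :=
  mem_pinnedBox.mpr ⟨by simp [pinZero], by simp [pinZero], fun v hva hvb => by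
    simpa [pinZero, hva, hvb] using hx v⟩

theorem sum_le_of_mem_pinnedBox {a b : ι} {M : ℕ} {w : ι → ℕ} (hw : w ∈ pinnedBox a b M) :
    ∑ v, w v ≤ Fintype.card ι * M := by
  obtain ⟨hwa, hwb, hlt⟩ := mem_pinnedBox.mp hw
  refine (sum_le_card_nsmul univ w M fun v _ => ?_).trans_eq (by rw [smul_eq_mul, card_univ])
  by_cases hva : v = a
  · simp [hva, hwa]
  by_cases hvb : v = b
  · simp [hvb, hwb]
  exact (hlt v hva hvb).le

theorem card_pinnedBox {a b : ι} (hab : a ≠ b) (M : ℕ) :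
    (pinnedBox a b M).card = M ^ (Fintype.card ι - 2) := by
  rw [pinnedBox, Fintype.card_piFinset]
  simp only [apply_ite card, card_singleton, card_range]
  rw [prod_ite, prod_const_one, one_mul, prod_const, filter_not, card_sdiff,
    show (univ.filter fun v => v = a ∨ v = b) = {a, b} by ext; simp, inter_univ, card_pair hab]
  simp

theorem card_range_product_pinnedBox {a b c d : ι} (hab : a ≠ b) (hcd : c ≠ d) (M : ℕ) :
    (range M ×ˢ pinnedBox a b M ×ˢ pinnedBox c d M).card = M ^ (2 * Fintype.card ι - 3) := by
  have hcard : 2 ≤ Fintype.card ι := by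
    simpa [card_pair hab] using card_le_univ {a, b}
  rw [card_product, card_product, card_range, card_pinnedBox hab, card_pinnedBox hcd,
    ← pow_add, ← pow_succ']
  congr 1
  omega

end Pivots

section Cut

variable {ι : Type*} [Fintype ι] [DecidableEq ι]

/-- The weighted degree of `v` in the bipartite multigraph across the cut `A | Aᶜ` that has
`p i s` edges between `i ∈ A` and `s ∉ A`. -/
def cutDegree (A : Finset ι) (p : ι → ι → ℕ) (v : ι) : ℕ :=
  if v ∈ A then ∑ s ∈ Aᶜ, p v s else ∑ i ∈ A, p i v

def cutWeight (A : Finset ι) (p : ι → ι → ℕ) : ℕ :=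
  ∑ i ∈ A, ∑ s ∈ Aᶜ, p i s

theorem prod_prod_mul_pow_eq_prod_pow_cutDegree {M : Type*} [CommMonoid M] (A : Finset ι)
    (g : ι → M) (p : ι → ι → ℕ) :
    ∏ i ∈ A, ∏ s ∈ Aᶜ, (g i * g s) ^ p i s = ∏ v, g v ^ cutDegree A p v := by
  simp only [mul_pow, prod_mul_distrib, prod_pow_eq_pow_sum]
  rw [prod_comm (s := A), ← prod_mul_prod_compl A]
  simp only [prod_pow_eq_pow_sum]
  congr 1 <;> refine prod_congr rfl fun v hv => ?_
  · rw [cutDegree, if_pos hv]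
  · rw [cutDegree, if_neg (mem_compl.mp hv)]

theorem sum_cutDegree (A : Finset ι) (p : ι → ι → ℕ) :
    ∑ v ∈ A, cutDegree A p v = cutWeight A p :=
  sum_congr rfl fun _ hv => if_pos hv

theorem sum_compl_cutDegree (A : Finset ι) (p : ι → ι → ℕ) :
    ∑ v ∈ Aᶜ, cutDegree A p v = cutWeight A p := by
  rw [cutWeight, sum_comm]
  exact sum_congr rfl fun _ hv => if_neg (mem_compl.mp hv)

/-- Edge multiplicities of a double star with central edge `a b` of multiplicity `r`: every
other vertex `v` is joined by `w v` edges to the centre on the other side of the cut. -/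
def doubleStar (a b : ι) (r : ℕ) (w : ι → ℕ) : ι → ι → ℕ := fun i s =>
  if i = a then (if s = b then r else w s) else if s = b then w i else 0

section DoubleStar

variable {A : Finset ι} {a b : ι} (ha : a ∈ A) (hb : b ∉ A) (r : ℕ) {w : ι → ℕ}
include ha hb

theorem cutDegree_doubleStar_of_ne {v : ι} (hva : v ≠ a) (hvb : v ≠ b) :
    cutDegree A (doubleStar a b r w) v = w v := by
  by_cases hv : v ∈ A
  · simp [cutDegree, doubleStar, hv, hva, hb]
  · simp [cutDegree, doubleStar, hv, hvb, ha]

theorem cutDegree_doubleStar_left (hwb : w b = 0) :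
    cutDegree A (doubleStar a b r w) a = r + ∑ s ∈ Aᶜ, w s := by
  have hb' : b ∈ Aᶜ := mem_compl.mpr hb
  rw [cutDegree, if_pos ha, ← add_sum_erase _ _ hb', ← add_sum_erase _ _ hb', hwb, zero_add]
  simp only [doubleStar]
  exact congrArg _ (sum_congr rfl fun s hs => if_neg (ne_of_mem_erase hs))

theorem cutWeight_doubleStar (hwa : w a = 0) (hwb : w b = 0) :
    cutWeight A (doubleStar a b r w) = r + ∑ v, w v := by
  rw [← sum_cutDegree, ← add_sum_erase _ _ ha, cutDegree_doubleStar_left ha hb r hwb,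
    sum_congr rfl fun v hv => cutDegree_doubleStar_of_ne ha hb r (ne_of_mem_erase hv)
      (ne_of_mem_of_not_mem (mem_of_mem_erase hv) hb),
    sum_erase _ hwa, ← sum_add_sum_compl A w]
  ring

theorem eq_of_cutDegree_doubleStar_eq {r' : ℕ} {w' : ι → ℕ} (hwa : w a = 0) (hwb : w b = 0)
    (hwa' : w' a = 0) (hwb' : w' b = 0)
    (h : cutDegree A (doubleStar a b r w) = cutDegree A (doubleStar a b r' w')) :
    r = r' ∧ w = w' := by
  obtain rfl : w = w' := funext fun v => by
    by_cases hva : v = a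
    · rw [hva, hwa, hwa']
    by_cases hvb : v = b
    · rw [hvb, hwb, hwb']
    simpa only [cutDegree_doubleStar_of_ne ha hb _ hva hvb] using congrFun h v
  have hra := congrFun h a
  rw [cutDegree_doubleStar_left ha hb _ hwb, cutDegree_doubleStar_left ha hb _ hwb] at hra
  exact ⟨by omega, rfl⟩

end DoubleStar

def degreePairs (A C : Finset ι) (k : ℕ) : Set ((ι → ℕ) × (ι → ℕ)) :=
  {d | ∃ p q : ι → ι → ℕ, cutWeight A p + cutWeight C q = k ∧ d = (cutDegree A p, cutDegree C q)}

def balancedPairs (A C : Finset ι) (k : ℕ) : Set ((ι → ℕ) × (ι → ℕ)) :=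
  {d | ∑ v ∈ Aᶜ, d.1 v = ∑ v ∈ A, d.1 v ∧ ∑ v ∈ Cᶜ, d.2 v = ∑ v ∈ C, d.2 v ∧
    ∑ v ∈ A, d.1 v + ∑ v ∈ C, d.2 v = k}

theorem degreePairs_subset_balancedPairs (A C : Finset ι) (k : ℕ) :
    degreePairs A C k ⊆ balancedPairs A C k := by
  rintro _ ⟨p, q, hk, rfl⟩
  simpa [balancedPairs, sum_cutDegree, sum_compl_cutDegree] using hk

theorem mapsTo_sum_pinZero_balancedPairs {A C : Finset ι} (a a' c c' : ι) (k : ℕ) :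
    Set.MapsTo (fun d => (∑ v ∈ A, d.1 v, pinZero a a' d.1, pinZero c c' d.2))
      (balancedPairs A C k)
      ↑(range (k + 1) ×ˢ pinnedBox a a' (k + 1) ×ˢ pinnedBox c c' (k + 1)) := by
  rintro ⟨x, y⟩ ⟨hx, hy, hk⟩
  dsimp only at hx hy hk
  simp only [mem_coe, mem_product, mem_range]
  refine ⟨by omega, pinZero_mem_pinnedBox fun v => ?_, pinZero_mem_pinnedBox fun v => ?_⟩
  · have := le_sum_of_sum_compl_eq hx v
    omega
  · have := le_sum_of_sum_compl_eq hy v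
    omega

section Counting

variable {A C : Finset ι} {a a' c c' : ι} (ha : a ∈ A) (ha' : a' ∉ A) (hc : c ∈ C)
  (hc' : c' ∉ C) (k : ℕ)
include ha ha' hc hc'

theorem injOn_sum_pinZero_balancedPairs :
    Set.InjOn (fun d => (∑ v ∈ A, d.1 v, pinZero a a' d.1, pinZero c c' d.2))
      (balancedPairs A C k) := by
  rintro ⟨x, y⟩ ⟨hx, hy, hk⟩ ⟨x', y'⟩ ⟨hx', hy', hk'⟩ h
  dsimp only at hx hy hk hx' hy' hk'
  simp only [Prod.mk.injEq] at h
  obtain ⟨hA, hxx, hyy⟩ := h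
  refine Prod.ext (eq_of_sum_eq_of_sum_compl_eq ha ha' hA (by rw [hx, hx', hA])
    fun v hva hva' => apply_eq_of_pinZero_eq hxx hva hva') ?_
  have hC : ∑ v ∈ C, y v = ∑ v ∈ C, y' v := by omega
  exact eq_of_sum_eq_of_sum_compl_eq hc hc' hC (by rw [hy, hy', hC])
    fun v hvc hvc' => apply_eq_of_pinZero_eq hyy hvc hvc'

theorem balancedPairs_finite : (balancedPairs A C k).Finite :=
  (finite_toSet _).of_injOn (mapsTo_sum_pinZero_balancedPairs a a' c c' k)
    (injOn_sum_pinZero_balancedPairs ha ha' hc hc' k)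

theorem ncard_degreePairs_le :
    (degreePairs A C k).ncard ≤ (k + 1) ^ (2 * Fintype.card ι - 3) := by
  refine (Set.ncard_le_ncard (degreePairs_subset_balancedPairs A C k)
    (balancedPairs_finite ha ha' hc hc' k)).trans ?_
  rw [← card_range_product_pinnedBox (ne_of_mem_of_not_mem ha ha')
    (ne_of_mem_of_not_mem hc hc'), ← Set.ncard_coe_finset]
  exact Set.ncard_le_ncard_of_injOn _ (mapsTo_sum_pinZero_balancedPairs a a' c c' k)
    (injOn_sum_pinZero_balancedPairs ha ha' hc hc' k) (finite_toSet _)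

theorem pow_le_ncard_degreePairs {m : ℕ} (hm : (2 * Fintype.card ι + 1) * m ≤ k) :
    m ^ (2 * Fintype.card ι - 3) ≤ (degreePairs A C k).ncard := by
  rw [← card_range_product_pinnedBox (ne_of_mem_of_not_mem ha ha')
    (ne_of_mem_of_not_mem hc hc'), ← Set.ncard_coe_finset]
  refine Set.ncard_le_ncard_of_injOn (fun t => (cutDegree A (doubleStar a a' t.1 t.2.1),
      cutDegree C (doubleStar c c' (k - (t.1 + ∑ v, t.2.1 v + ∑ v, t.2.2 v)) t.2.2))) ?_ ?_
    ((balancedPairs_finite ha ha' hc hc' k).subset (degreePairs_subset_balancedPairs A C k))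
  · rintro ⟨r, w, w'⟩ ht
    simp only [mem_coe, mem_product, mem_range] at ht
    obtain ⟨hr, hw, hw'⟩ := ht
    obtain ⟨hwa, hwa', -⟩ := mem_pinnedBox.mp hw
    obtain ⟨hwc, hwc', -⟩ := mem_pinnedBox.mp hw'
    refine ⟨_, _, ?_, rfl⟩
    dsimp only
    rw [cutWeight_doubleStar ha ha' _ hwa hwa', cutWeight_doubleStar hc hc' _ hwc hwc']
    have := sum_le_of_mem_pinnedBox hw
    have := sum_le_of_mem_pinnedBox hw'
    have : (2 * Fintype.card ι + 1) * m = Fintype.card ι * m + Fintype.card ι * m + m := by ring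
    omega
  · rintro ⟨r, w, w'⟩ ht ⟨r₂, w₂, w₂'⟩ ht₂ h
    simp only [mem_coe, mem_product, mem_pinnedBox] at ht ht₂
    obtain ⟨-, ⟨hwa, hwa', -⟩, ⟨hwc, hwc', -⟩⟩ := ht
    obtain ⟨-, ⟨hwa₂, hwa₂', -⟩, ⟨hwc₂, hwc₂', -⟩⟩ := ht₂
    simp only [Prod.mk.injEq] at h
    obtain ⟨rfl, rfl⟩ := eq_of_cutDegree_doubleStar_eq ha ha' r hwa hwa' hwa₂ hwa₂' h.1
    obtain ⟨-, rfl⟩ := eq_of_cutDegree_doubleStar_eq hc hc' _ hwc hwc' hwc₂ hwc₂' h.2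
    rfl

end Counting

end Cut

theorem finrank_span_image_eq_ncard {R M α : Type*} [Ring R] [StrongRankCondition R]
    [AddCommGroup M] [Module R M] {v : α → M} {s : Set α} (hs : LinearIndepOn R v s) :
    Module.finrank R (Submodule.span R (v '' s)) = s.ncard := by
  rw [Set.ncard_def, ← toENat_rank_span_set hs, Cardinal.toNat_toENat]
  rfl

theorem monomial_equivFunOnFinite_symm_sumElim {R ι : Type*} [CommSemiring R] [Fintype ι]
    (x y : ι → ℕ) :
    monomial (Finsupp.equivFunOnFinite.symm (Sum.elim x y)) (1 : R) =
      (∏ v, X (Sum.inl v) ^ x v) * ∏ v, X (Sum.inr v) ^ y v := by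
  rw [monomial_eq, C_1, one_mul, Finsupp.prod_fintype _ _ fun _ => pow_zero _,
    Fintype.prod_sum_type]
  simp

theorem finrank_span_monomial_sumElim {R ι : Type*} [CommRing R] [Nontrivial R] [Finite ι]
    (s : Set ((ι → ℕ) × (ι → ℕ))) :
    Module.finrank R (Submodule.span R
      ((fun d => monomial (Finsupp.equivFunOnFinite.symm (Sum.elim d.1 d.2)) (1 : R)) '' s)) =
      s.ncard := by
  refine finrank_span_image_eq_ncard (LinearIndependent.linearIndepOn ?_ s)
  have hinj : Function.Injective fun d : (ι → ℕ) × (ι → ℕ) =>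
      Finsupp.equivFunOnFinite.symm (Sum.elim d.1 d.2) := fun d e h =>
    have h' := Finsupp.equivFunOnFinite.symm.injective h
    Prod.ext (funext fun v => congrFun h' (.inl v)) (funext fun v => congrFun h' (.inr v))
  simpa only [Function.comp_def, coe_basisMonomials] using
    (basisMonomials (ι ⊕ ι) R).linearIndependent.comp _ hinj

theorem Qset_eq_image (n n₁ n₂ k : ℕ) :
    Qset n n₁ n₂ k =
      (fun d => monomial (Finsupp.equivFunOnFinite.symm (Sum.elim d.1 d.2)) (1 : ℝ)) ''
        degreePairs (univ.filter fun i : Fin n => i.val < n₁)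
          (univ.filter fun j : Fin n => j.val < n₂) k := by
  have hcompl (m : ℕ) :
      (univ.filter fun s : Fin n => m ≤ s.val) = (univ.filter fun i : Fin n => i.val < m)ᶜ := by
    ext; simp
  ext f
  simp only [Qset, hcompl, prod_prod_mul_pow_eq_prod_pow_cutDegree, degreePairs,
    Set.mem_image, monomial_equivFunOnFinite_symm_sumElim]
  constructor
  · rintro ⟨p, q, hk, rfl⟩
    exact ⟨_, ⟨p, q, hk, rfl⟩, rfl⟩
  · rintro ⟨_, ⟨p, q, hk, rfl⟩, rfl⟩
    exact ⟨p, q, hk, rfl⟩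

theorem div_two_mul_le_natCast_div {N k : ℕ} (hN : 0 < N) (hk : N ≤ k) :
    (k : ℝ) / (2 * N) ≤ ((k / N : ℕ) : ℝ) := by
  have hq : 1 ≤ k / N := (Nat.one_le_div_iff hN).mpr hk
  have hk' : k ≤ 2 * N * (k / N) := by
    have := Nat.lt_mul_div_succ k hN
    nlinarith
  rw [div_le_iff₀ (by positivity)]
  exact_mod_cast (by linarith : k ≤ (k / N) * (2 * N))

theorem one_div_two_mul_pow_mul_pow_le {N k : ℕ} (hN : 0 < N) (hk : N ≤ k) (e : ℕ) :
    (1 / (2 * N) : ℝ) ^ e * (k : ℝ) ^ e ≤ ((k / N : ℕ) : ℝ) ^ e := by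
  rw [← mul_pow, one_div_mul_eq_div]
  gcongr
  exact div_two_mul_le_natCast_div hN hk

theorem add_one_pow_le_two_pow_mul_pow {k : ℕ} (hk : 1 ≤ k) (e : ℕ) :
    ((k : ℝ) + 1) ^ e ≤ 2 ^ e * (k : ℝ) ^ e := by
  rw [← mul_pow]
  gcongr
  have : (1 : ℝ) ≤ k := by exact_mod_cast hk
  linarith

theorem stmt_7_general (n n₁ n₂ : ℕ) (h1 : 1 ≤ n₁) (h2 : n₁ ≤ n₂) (h3 : n₂ ≤ n - 1) :
    ∃ c₁ c₂ : ℝ, 0 < c₁ ∧ 0 < c₂ ∧ ∃ K : ℕ, ∀ k ≥ K,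
      c₁ * (k : ℝ) ^ (2 * n - 3) ≤
        (Module.finrank ℝ (Submodule.span ℝ (Qset n n₁ n₂ k)) : ℝ) ∧
      (Module.finrank ℝ (Submodule.span ℝ (Qset n n₁ n₂ k)) : ℝ) ≤
        c₂ * (k : ℝ) ^ (2 * n - 3) := by
  have first_mem {m : ℕ} (hm : 0 < m) :
      (⟨0, by omega⟩ : Fin n) ∈ univ.filter fun i : Fin n => i.val < m := by simpa
  have last_notMem {m : ℕ} (hm : m ≤ n - 1) :
      (⟨n - 1, by omega⟩ : Fin n) ∉ univ.filter fun i : Fin n => i.val < m := by simpa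
  have ha := first_mem h1
  have ha' := last_notMem (h2.trans h3)
  have hc := first_mem (h1.trans h2)
  have hc' := last_notMem h3
  set N := 2 * n + 1
  refine ⟨(1 / (2 * N)) ^ (2 * n - 3), 2 ^ (2 * n - 3), by positivity, by positivity, N,
    fun k hk => ?_⟩
  have hlower := pow_le_ncard_degreePairs ha ha' hc hc' k (m := k / N)
    (by simpa [N, mul_comm] using Nat.div_mul_le_self k N)
  have hupper := ncard_degreePairs_le ha ha' hc hc' k
  rw [Fintype.card_fin] at hlower hupper
  rw [Qset_eq_image, finrank_span_monomial_sumElim]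
  constructor
  · calc _ ≤ ((k / N : ℕ) : ℝ) ^ (2 * n - 3) := one_div_two_mul_pow_mul_pow_le (by omega) hk _
      _ ≤ _ := by exact_mod_cast hlower
  · calc _ ≤ ((k : ℝ) + 1) ^ (2 * n - 3) := by exact_mod_cast hupper
      _ ≤ _ := add_one_pow_le_two_pow_mul_pow (by omega) _

theorem stmt_7 (n n₁ n₂ : ℕ) (hn : 2 ≤ n) (h1 : 1 ≤ n₁) (h2 : n₁ ≤ n₂) (h3 : n₂ ≤ n - 1) :
    ∃ c₁ c₂ : ℝ, 0 < c₁ ∧ 0 < c₂ ∧ ∃ K : ℕ, ∀ k ≥ K,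
      c₁ * (k : ℝ) ^ (2 * n - 3) ≤
        (Module.finrank ℝ (Submodule.span ℝ (Qset n n₁ n₂ k)) : ℝ) ∧
      (Module.finrank ℝ (Submodule.span ℝ (Qset n n₁ n₂ k)) : ℝ) ≤
        c₂ * (k : ℝ) ^ (2 * n - 3) :=
  stmt_7_general n n₁ n₂ h1 h2 h3
end

section
/- Let n ≥ 2 and n₁, n₂ be integers with 1 ≤ n₁, n₁+1 < n₂ < n, and let m₁, m₂ ∈ ℕ. Let S₁ be the following finite set of ℝ-linear endomorphisms of B = ℝ[x₁,…,xₙ,y₁,…,yₙ]: f ↦ −x_i·∂f/∂x_r − y_i·∂f/∂y_r for 1 ≤ i < r ≤ n₁; f ↦ x_s·∂f/∂x_j − y_j·∂f/∂y_s for n₁ < j < s ≤ n₂; and f ↦ x_t·∂f/∂x_p + y_t·∂f/∂y_p for n₂ < p < t ≤ n. Let v = x_{n₁}^{m₁}·y_{n₂+1}^{m₂}. Then the ℝ-linear span of all polynomials of the form T₁(T₂(⋯T_j(v)⋯)), for j ≥ 0 and T₁,…,T_j ∈ S₁, equals the ℝ-linear span of the set of monomials { ∏_{i=1}^{n₁}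 x_i^{k_i} · ∏_{t=n₂+1}^{n} y_t^{l_t} : k_i, l_t ∈ ℕ, ∑_{i=1}^{n₁} k_i = m₁, ∑_{t=n₂+1}^{n} l_t = m₂ }. -/
open MvPolynomial

/-- Multiplication by a polynomial, as an ℝ-linear endomorphism. -/
noncomputable def mulE {σ : Type} (a : MvPolynomial σ ℝ) :
    Module.End ℝ (MvPolynomial σ ℝ) := LinearMap.mulLeft ℝ a

/-- Formal partial derivative ∂/∂v, as an ℝ-linear endomorphism. -/
noncomputable def pdE {σ : Type} [DecidableEq σ] (v : σ) :
    Module.End ℝ (MvPolynomial σ ℝ) := (pderiv v).toLinearMap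

/-- The set S₁ of endomorphisms of B = ℝ[x₁,…,xₙ,y₁,…,yₙ] (x's are `Sum.inl`, y's
`Sum.inr`, 0-based indexing):
f ↦ −x_i ∂f/∂x_r − y_i ∂f/∂y_r for 1 ≤ i < r ≤ n₁ (0-based: i < r, r.val < n₁);
f ↦ x_s ∂f/∂x_j − y_j ∂f/∂y_s for n₁ < j < s ≤ n₂ (0-based: n₁ ≤ j.val, j < s, s.val < n₂);
f ↦ x_t ∂f/∂x_p + y_t ∂f/∂y_p for n₂ < p < t ≤ n (0-based: n₂ ≤ p.val, p < t). -/
def S1set (n n₁ n₂ : ℕ) : Set (Module.End ℝ (MvPolynomial (Fin n ⊕ Fin n) ℝ)) :=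
  {T | (∃ i r : Fin n, i < r ∧ r.val < n₁ ∧
          T = -(mulE (X (Sum.inl i)) * pdE (Sum.inl r))
                - mulE (X (Sum.inr i)) * pdE (Sum.inr r)) ∨
       (∃ j s : Fin n, n₁ ≤ j.val ∧ j < s ∧ s.val < n₂ ∧
          T = mulE (X (Sum.inl s)) * pdE (Sum.inl j)
                - mulE (X (Sum.inr j)) * pdE (Sum.inr s)) ∨
       (∃ p t : Fin n, n₂ ≤ p.val ∧ p < t ∧
          T = mulE (X (Sum.inl t)) * pdE (Sum.inl p)
                + mulE (X (Sum.inr t)) * pdE (Sum.inr p))}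

/-!
Each operator in S₁ is a sum of two terms ±u ∂/∂w with u, w variables. On a monomial in the
variables x₁,…,x_{n₁}, y_{n₂+1},…,y_n only the terms whose w is one of these variables survive,
and for those u lies in the same block {x₁,…,x_{n₁}} or {y_{n₂+1},…,y_n} as w, so the term moves
one unit of exponent from w to u. Hence the span of these monomials of bidegree (m₁, m₂) is
S₁-stable and contains v. Conversely, S₁ contains operators acting on such monomials as
−x_j ∂/∂x_{n₁} (j < n₁) and as y_t ∂/∂y_{n₂+1} (t > n₂+1). Starting from v, these nonzero
multiples of unit moves out of x_{n₁} and y_{n₂+1} reach every monomial of the bidegree, by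
induction on the total exponent not sitting on x_{n₁} or y_{n₂+1}.
-/

section Orbit

variable {R M : Type*} [Semiring R] [AddCommMonoid M] [Module R M]

def listOrbit (S : Set (Module.End R M)) (v : M) : Set M :=
  {f | ∃ l : List (Module.End R M), (∀ T ∈ l, T ∈ S) ∧ f = l.prod v}

variable {S : Set (Module.End R M)} {v : M}

theorem self_mem_listOrbit : v ∈ listOrbit S v :=
  ⟨[], by simp, by simp⟩

theorem listOrbit_subset {P : Submodule R M} (hv : v ∈ P) (hP : ∀ T ∈ S, ∀ p ∈ P, T p ∈ P) :
    listOrbit S v ⊆ P := by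
  rintro _ ⟨l, hl, rfl⟩
  induction l with
  | nil => simpa using hv
  | cons T l ih =>
    rw [List.forall_mem_cons] at hl
    rw [List.prod_cons, Module.End.mul_apply]
    exact hP T hl.1 _ (ih hl.2)

theorem apply_mem_span_listOrbit {T : Module.End R M} (hT : T ∈ S) {p : M}
    (hp : p ∈ Submodule.span R (listOrbit S v)) : T p ∈ Submodule.span R (listOrbit S v) := by
  suffices h : listOrbit S v ⊆ (Submodule.span R (listOrbit S v)).comap T from
    Submodule.span_le.2 h hp
  rintro _ ⟨l, hl, rfl⟩
  exact Submodule.subset_span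
    ⟨T :: l, List.forall_mem_cons.2 ⟨hT, hl⟩, by rw [List.prod_cons, Module.End.mul_apply]⟩

end Orbit

theorem sum_apply_add_single {σ : Type*} [DecidableEq σ] (u : Finset σ) (d : σ →₀ ℕ) (a : σ)
    (k : ℕ) : ∑ x ∈ u, (d + Finsupp.single a k) x = ∑ x ∈ u, d x + if a ∈ u then k else 0 := by
  simp [Finset.sum_add_distrib, Finsupp.single_apply]

theorem eq_zero_of_sum_le_apply {ι : Type*} {f : ι → ℕ} {u : Finset ι} {c x : ι} (hc : c ∈ u)
    (hsum : ∑ a ∈ u, f a ≤ f c) (hx : x ∈ u) (hxc : x ≠ c) : f x = 0 := by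
  classical
  have hsplit := Finset.add_sum_erase u f hc
  exact Finset.sum_eq_zero_iff.1 (by omega) x (Finset.mem_erase.2 ⟨hxc, hx⟩)

theorem exists_eq_add_single_of_lt_sum {σ : Type*} [DecidableEq σ] {u : Finset σ} {d : σ →₀ ℕ}
    {c : σ} (hc : c ∈ u) (hlt : d c < ∑ a ∈ u, d a) :
    ∃ a ∈ u, a ≠ c ∧ ∃ d₀, d = d₀ + Finsupp.single a 1 := by
  have hsplit := Finset.add_sum_erase u d hc
  obtain ⟨a, ha, hda⟩ := Finset.exists_ne_zero_of_sum_ne_zero (s := u.erase c) (f := d) (by omega)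
  obtain ⟨hac, hau⟩ := Finset.mem_erase.1 ha
  exact ⟨a, hau, hac, _, (Finsupp.sub_add_single_one_cancel hda).symm⟩

section BlockExponents

variable {σ : Type*} [DecidableEq σ] {s t : Finset σ} {m₁ m₂ : ℕ}

variable (s t m₁ m₂) in
def blockExponents : Set (σ →₀ ℕ) :=
  {d | d.support ⊆ s ∪ t ∧ ∑ a ∈ s, d a = m₁ ∧ ∑ a ∈ t, d a = m₂}

theorem apply_eq_zero_of_mem_blockExponents {d : σ →₀ ℕ} (hd : d ∈ blockExponents s t m₁ m₂)
    {x : σ} (hx : x ∉ s ∪ t) : d x = 0 :=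
  Finsupp.notMem_support_iff.1 fun h => hx (hd.1 h)

theorem apply_le_of_mem_blockExponents {d : σ →₀ ℕ} (hd : d ∈ blockExponents s t m₁ m₂) {ρ τ : σ}
    (hρ : ρ ∈ s) (hτ : τ ∈ t) : d ρ ≤ m₁ ∧ d τ ≤ m₂ :=
  ⟨hd.2.1 ▸ Finset.single_le_sum (fun _ _ => Nat.zero_le _) hρ,
    hd.2.2 ▸ Finset.single_le_sum (fun _ _ => Nat.zero_le _) hτ⟩

theorem add_single_mem_blockExponents (hst : Disjoint s t) {d : σ →₀ ℕ} {a b : σ}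
    (hab : a ∈ s ∧ b ∈ s ∨ a ∈ t ∧ b ∈ t) (h : d + Finsupp.single b 1 ∈ blockExponents s t m₁ m₂) :
    d + Finsupp.single a 1 ∈ blockExponents s t m₁ m₂ := by
  obtain ⟨hsupp, hs, ht⟩ := h
  have hmem : (a ∈ s ↔ b ∈ s) ∧ (a ∈ t ↔ b ∈ t) := by
    rcases hab with ⟨ha, hb⟩ | ⟨ha, hb⟩
    · simp [ha, hb, Finset.disjoint_left.1 hst ha, Finset.disjoint_left.1 hst hb]
    · simp [ha, hb, Finset.disjoint_right.1 hst ha, Finset.disjoint_right.1 hst hb]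
  rw [sum_apply_add_single] at hs ht
  refine ⟨fun x hx => ?_, ?_, ?_⟩
  · by_cases hxa : x = a
    · subst hxa
      rcases hab with ⟨ha, -⟩ | ⟨ha, -⟩ <;> simp [ha]
    · apply hsupp
      simp_all [Finsupp.single_apply]
  · rwa [sum_apply_add_single, if_congr hmem.1 rfl rfl]
  · rwa [sum_apply_add_single, if_congr hmem.2 rfl rfl]

theorem single_add_single_mem_blockExponents (hst : Disjoint s t) {ρ τ : σ} (hρ : ρ ∈ s)
    (hτ : τ ∈ t) : Finsupp.single ρ m₁ + Finsupp.single τ m₂ ∈ blockExponents s t m₁ m₂ := by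
  refine ⟨?_, ?_, ?_⟩
  · refine Finsupp.support_add.trans (Finset.union_subset_union ?_ ?_) <;>
      exact Finsupp.support_single_subset.trans (by simpa)
  · simp [Finset.sum_add_distrib, Finsupp.single_apply, hρ, Finset.disjoint_right.1 hst hτ]
  · simp [Finset.sum_add_distrib, Finsupp.single_apply, hτ, Finset.disjoint_left.1 hst hρ]

theorem eq_single_add_single_of_mem_blockExponents (hst : Disjoint s t) {ρ τ : σ} (hρ : ρ ∈ s)
    (hτ : τ ∈ t) {d : σ →₀ ℕ} (hd : d ∈ blockExponents s t m₁ m₂) (h₁ : m₁ ≤ d ρ)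
    (h₂ : m₂ ≤ d τ) : d = Finsupp.single ρ m₁ + Finsupp.single τ m₂ := by
  obtain ⟨hle₁, hle₂⟩ := apply_le_of_mem_blockExponents hd hρ hτ
  have ⟨_, hs, ht⟩ := hd
  have hρτ : ρ ≠ τ := fun h => Finset.disjoint_left.1 hst hρ (h ▸ hτ)
  ext x
  by_cases hxρ : x = ρ
  · subst hxρ
    simp [hρτ]
    omega
  by_cases hxτ : x = τ
  · subst hxτ
    simp [Ne.symm hρτ]
    omega
  simp only [Finsupp.add_apply, Finsupp.single_eq_of_ne hxρ, Finsupp.single_eq_of_ne hxτ,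
    add_zero]
  by_cases hxs : x ∈ s
  · exact eq_zero_of_sum_le_apply hρ (by omega) hxs hxρ
  by_cases hxt : x ∈ t
  · exact eq_zero_of_sum_le_apply hτ (by omega) hxt hxτ
  exact apply_eq_zero_of_mem_blockExponents hd (by simp [hxs, hxt])

theorem blockExponents_induction {Q : (σ →₀ ℕ) → Prop} (hst : Disjoint s t) {ρ τ : σ}
    (hρ : ρ ∈ s) (hτ : τ ∈ t) (base : Q (Finsupp.single ρ m₁ + Finsupp.single τ m₂))
    (shift_s : ∀ a ∈ s, ∀ d, d + Finsupp.single ρ 1 ∈ blockExponents s t m₁ m₂ →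
      Q (d + Finsupp.single ρ 1) → Q (d + Finsupp.single a 1))
    (shift_t : ∀ a ∈ t, ∀ d, d + Finsupp.single τ 1 ∈ blockExponents s t m₁ m₂ →
      Q (d + Finsupp.single τ 1) → Q (d + Finsupp.single a 1)) :
    ∀ d ∈ blockExponents s t m₁ m₂, Q d := by
  have hρτ : ρ ≠ τ := fun h => Finset.disjoint_left.1 hst hρ (h ▸ hτ)
  suffices h : ∀ k, ∀ d ∈ blockExponents s t m₁ m₂, d ρ + d τ + k = m₁ + m₂ → Q d by
    intro d hd
    have := apply_le_of_mem_blockExponents hd hρ hτ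
    exact h (m₁ + m₂ - (d ρ + d τ)) d hd (by omega)
  intro k
  induction k with
  | zero =>
    intro d hd hk
    have := apply_le_of_mem_blockExponents hd hρ hτ
    rwa [eq_single_add_single_of_mem_blockExponents hst hρ hτ hd (by omega) (by omega)]
  | succ k ih =>
    intro d hd hk
    have ⟨_, hs, ht⟩ := hd
    obtain hlt | hlt : d ρ < m₁ ∨ d τ < m₂ := by
      have := apply_le_of_mem_blockExponents hd hρ hτ
      omega
    · obtain ⟨a, ha, haρ, d, rfl⟩ := exists_eq_add_single_of_lt_sum hρ (hs ▸ hlt)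
      have haτ : a ≠ τ := fun h => Finset.disjoint_left.1 hst ha (h ▸ hτ)
      have he := add_single_mem_blockExponents hst (Or.inl ⟨hρ, ha⟩) hd
      refine shift_s a ha d he (ih _ he ?_)
      simp [haρ.symm, haτ.symm, hρτ.symm] at hk ⊢
      omega
    · obtain ⟨a, ha, haτ, d, rfl⟩ := exists_eq_add_single_of_lt_sum hτ (ht ▸ hlt)
      have haρ : a ≠ ρ := fun h => Finset.disjoint_left.1 hst hρ (h ▸ ha)
      have he := add_single_mem_blockExponents hst (Or.inr ⟨hτ, ha⟩) hd
      refine shift_t a ha d he (ih _ he ?_)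
      simp [haρ.symm, haτ.symm, hρτ] at hk ⊢
      omega

end BlockExponents

section Operators

variable {σ : Type} [DecidableEq σ]

theorem mulE_X_mul_pdE_monomial_add_single (a b : σ) (d : σ →₀ ℕ) (c : ℝ) :
    (mulE (X a) * pdE b) (monomial (d + Finsupp.single b 1) c) =
      monomial (d + Finsupp.single a 1) (c * (d b + 1)) := by
  simp [mulE, pdE, pderiv_monomial, X, monomial_mul, add_comm]

theorem mulE_X_mul_pdE_monomial_of_eq_zero (a : σ) {b : σ} {d : σ →₀ ℕ} (hd : d b = 0) (c : ℝ) :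
    (mulE (X a) * pdE b) (monomial d c) = 0 := by
  simp [mulE, pdE, pderiv_monomial, hd]

variable (s t : Finset σ) (m₁ m₂ : ℕ) in
noncomputable def blockSpan : Submodule ℝ (MvPolynomial σ ℝ) :=
  Submodule.span ℝ ((monomial · (1 : ℝ)) '' blockExponents s t m₁ m₂)

theorem mulE_X_mul_pdE_mem_blockSpan {s t : Finset σ} {m₁ m₂ : ℕ} (hst : Disjoint s t) {a b : σ}
    (hab : b ∈ s ∪ t → a ∈ s ∧ b ∈ s ∨ a ∈ t ∧ b ∈ t) {p : MvPolynomial σ ℝ}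
    (hp : p ∈ blockSpan s t m₁ m₂) : (mulE (X a) * pdE b) p ∈ blockSpan s t m₁ m₂ := by
  suffices h : (monomial · (1 : ℝ)) '' blockExponents s t m₁ m₂ ⊆
      (blockSpan s t m₁ m₂).comap (mulE (X a) * pdE b) from
    (Submodule.span_le (p := (blockSpan s t m₁ m₂).comap _)).2 h hp
  rintro _ ⟨d, hd, rfl⟩
  rw [SetLike.mem_coe, Submodule.mem_comap]
  by_cases hb : d b = 0
  · rw [mulE_X_mul_pdE_monomial_of_eq_zero a hb]
    exact zero_mem _
  have hbst : b ∈ s ∪ t := hd.1 (Finsupp.mem_support_iff.2 hb)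
  rw [← Finsupp.sub_add_single_one_cancel hb] at hd ⊢
  rw [mulE_X_mul_pdE_monomial_add_single, one_mul, ← mul_one (_ + 1 : ℝ), ← smul_eq_mul,
    ← smul_monomial]
  exact Submodule.smul_mem _ _
    (Submodule.subset_span ⟨_, add_single_mem_blockExponents hst (hab hbst) hd, rfl⟩)

end Operators

section Blocks

variable {n : ℕ}

def xBlock (n : ℕ) (n₁ : ℕ) : Finset (Fin n ⊕ Fin n) :=
  (Finset.univ.filter (fun i : Fin n => i.val < n₁)).disjSum ∅

def yBlock (n : ℕ) (n₂ : ℕ) : Finset (Fin n ⊕ Fin n) :=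
  (∅ : Finset (Fin n)).disjSum (Finset.univ.filter (fun t : Fin n => n₂ ≤ t.val))

theorem disjoint_xBlock_yBlock (n₁ n₂ : ℕ) : Disjoint (xBlock n n₁) (yBlock n n₂) := by
  rw [Finset.disjoint_left]
  rintro (i | i) <;> simp [xBlock, yBlock]

theorem apply_mem_blockSpan_of_mem_S1set {n₁ n₂ m₁ m₂ : ℕ} (h12 : n₁ ≤ n₂) :
    ∀ T ∈ S1set n n₁ n₂, ∀ p ∈ blockSpan (xBlock n n₁) (yBlock n n₂) m₁ m₂,
      T p ∈ blockSpan (xBlock n n₁) (yBlock n n₂) m₁ m₂ := by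
  have hst := disjoint_xBlock_yBlock (n := n) n₁ n₂
  rintro T (⟨i, r, hir, hr, rfl⟩ | ⟨j, s, hj, hjs, hs, rfl⟩ | ⟨p, t, hp, hpt, rfl⟩) f hf <;>
    rw [Fin.lt_def] at * <;>
    simp only [LinearMap.sub_apply, LinearMap.neg_apply, LinearMap.add_apply]
  · refine sub_mem (neg_mem (mulE_X_mul_pdE_mem_blockSpan hst ?_ hf))
      (mulE_X_mul_pdE_mem_blockSpan hst ?_ hf) <;> simp [xBlock, yBlock] <;> omega
  · refine sub_mem (mulE_X_mul_pdE_mem_blockSpan hst ?_ hf)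
      (mulE_X_mul_pdE_mem_blockSpan hst ?_ hf) <;> simp [xBlock, yBlock] <;> omega
  · refine add_mem (mulE_X_mul_pdE_mem_blockSpan hst ?_ hf)
      (mulE_X_mul_pdE_mem_blockSpan hst ?_ hf) <;> simp [xBlock, yBlock] <;> omega

theorem setOf_prod_X_pow_eq_image_blockExponents (n₁ n₂ m₁ m₂ : ℕ) :
    {f : MvPolynomial (Fin n ⊕ Fin n) ℝ |
        ∃ kk ll : Fin n → ℕ,
          (∑ i ∈ Finset.univ.filter (fun i : Fin n => i.val < n₁), kk i) = m₁ ∧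
          (∑ t ∈ Finset.univ.filter (fun t : Fin n => n₂ ≤ t.val), ll t) = m₂ ∧
          f = (∏ i ∈ Finset.univ.filter (fun i : Fin n => i.val < n₁),
                X (Sum.inl i) ^ kk i) *
              (∏ t ∈ Finset.univ.filter (fun t : Fin n => n₂ ≤ t.val),
                X (Sum.inr t) ^ ll t)} =
      (monomial · 1) '' blockExponents (xBlock n n₁) (yBlock n n₂) m₁ m₂ := by
  have hunion : xBlock n n₁ ∪ yBlock n n₂ =
      (Finset.univ.filter (fun i : Fin n => i.val < n₁)).disjSum
        (Finset.univ.filter (fun t : Fin n => n₂ ≤ t.val)) := by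
    ext (i | i) <;> simp [xBlock, yBlock]
  have hprod : ∀ kk ll : Fin n → ℕ,
      (∏ i ∈ Finset.univ.filter (fun i : Fin n => i.val < n₁),
          (X (Sum.inl i) : MvPolynomial (Fin n ⊕ Fin n) ℝ) ^ kk i) *
        (∏ t ∈ Finset.univ.filter (fun t : Fin n => n₂ ≤ t.val), X (Sum.inr t) ^ ll t) =
      monomial (Finsupp.indicator (xBlock n n₁ ∪ yBlock n n₂) fun a _ => Sum.elim kk ll a) 1 := by
    intro kk ll
    rw [← prod_X_pow, hunion, Finset.prod_disjSum]
    rfl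
  ext f
  constructor
  · rintro ⟨kk, ll, hkk, hll, rfl⟩
    refine ⟨_, ⟨Finsupp.support_indicator_subset _ _, ?_, ?_⟩, (hprod kk ll).symm⟩ <;>
      simp +contextual [xBlock, yBlock, Finsupp.indicator_apply, Finset.sum_filter, ← hkk, ← hll]
  · rintro ⟨d, hd, rfl⟩
    refine ⟨fun i => d (Sum.inl i), fun t => d (Sum.inr t), ?_, ?_, ?_⟩
    · simpa [xBlock] using hd.2.1
    · simpa [yBlock] using hd.2.2
    rw [hprod]
    congr 1
    ext a
    rw [Finsupp.indicator_apply]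
    split_ifs with ha
    · cases a <;> rfl
    · exact apply_eq_zero_of_mem_blockExponents hd ha

theorem monomial_mem_span_listOrbit {n₁ n₂ m₁ m₂ : ℕ} (h12 : n₁ ≤ n₂) {ρ τ : Fin n}
    (hρ : ρ.val + 1 = n₁) (hτ : τ.val = n₂) {d : Fin n ⊕ Fin n →₀ ℕ}
    (hd : d ∈ blockExponents (xBlock n n₁) (yBlock n n₂) m₁ m₂) :
    monomial d 1 ∈ Submodule.span ℝ (listOrbit (S1set n n₁ n₂)
      (monomial (Finsupp.single (Sum.inl ρ) m₁ + Finsupp.single (Sum.inr τ) m₂) 1)) := by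
  have hst := disjoint_xBlock_yBlock (n := n) n₁ n₂
  refine blockExponents_induction (Q := fun d => monomial d (1 : ℝ) ∈ _) (ρ := Sum.inl ρ)
    (τ := Sum.inr τ) hst (by simp [xBlock]; omega) (by simp [yBlock]; omega)
    (Submodule.subset_span self_mem_listOrbit) ?_ ?_ d hd
  · rintro (j | j) hj e he hQ
    swap
    · simp [xBlock] at hj
    rcases eq_or_ne j ρ with rfl | hjρ
    · exact hQ
    have hjρ' : j < ρ := by
      simp only [xBlock, Finset.inl_mem_disjSum, Finset.mem_filter] at hj
      have := Fin.val_ne_of_ne hjρ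
      rw [Fin.lt_def]
      omega
    have hT : -(mulE (X (Sum.inl j)) * pdE (Sum.inl ρ)) - mulE (X (Sum.inr j)) * pdE (Sum.inr ρ)
        ∈ S1set n n₁ n₂ := Or.inl ⟨j, ρ, hjρ', by omega, rfl⟩
    have hyρ : (e + Finsupp.single (Sum.inl ρ) 1 : Fin n ⊕ Fin n →₀ ℕ) (Sum.inr ρ) = 0 :=
      apply_eq_zero_of_mem_blockExponents he (by simp [xBlock, yBlock]; omega)
    have := apply_mem_span_listOrbit hT hQ
    rwa [LinearMap.sub_apply, LinearMap.neg_apply, mulE_X_mul_pdE_monomial_add_single,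
      mulE_X_mul_pdE_monomial_of_eq_zero _ hyρ, sub_zero, one_mul, ← map_neg, ← mul_one (-_),
      ← smul_eq_mul, ← smul_monomial, Submodule.smul_mem_iff _ (neg_ne_zero.2 (by positivity))]
      at this
  · rintro (j | j) hj e he hQ
    · simp [yBlock] at hj
    rcases eq_or_ne j τ with rfl | hjτ
    · exact hQ
    have hτj : τ < j := by
      simp only [yBlock, Finset.inr_mem_disjSum, Finset.mem_filter] at hj
      have := Fin.val_ne_of_ne hjτ
      rw [Fin.lt_def]
      omega
    have hT : mulE (X (Sum.inl j)) * pdE (Sum.inl τ) + mulE (X (Sum.inr j)) * pdE (Sum.inr τ)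
        ∈ S1set n n₁ n₂ := Or.inr (Or.inr ⟨τ, j, by omega, hτj, rfl⟩)
    have hxτ : (e + Finsupp.single (Sum.inr τ) 1 : Fin n ⊕ Fin n →₀ ℕ) (Sum.inl τ) = 0 :=
      apply_eq_zero_of_mem_blockExponents he (by simp [xBlock, yBlock]; omega)
    have := apply_mem_span_listOrbit hT hQ
    rwa [LinearMap.add_apply, mulE_X_mul_pdE_monomial_add_single,
      mulE_X_mul_pdE_monomial_of_eq_zero _ hxτ, zero_add, one_mul, ← mul_one (_ + 1 : ℝ),
      ← smul_eq_mul, ← smul_monomial, Submodule.smul_mem_iff _ (by positivity)] at this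

end Blocks

/-- the span of all T₁(T₂(⋯T_j(v)⋯)), T₁,…,T_j ∈ S₁, v = x_{n₁}^{m₁} y_{n₂+1}^{m₂}
(0-based: x-index n₁−1 and y-index n₂), equals the span of the monomials
∏ x_i^{k_i} ∏ y_t^{l_t} with ∑ k_i = m₁ (over 1 ≤ i ≤ n₁) and ∑ l_t = m₂ (over n₂+1 ≤ t ≤ n). -/
theorem stmt_8 (n n₁ n₂ m₁ m₂ : ℕ) (h1 : 1 ≤ n₁) (h12 : n₁ + 1 < n₂)
    (h2 : n₂ < n) :
    Submodule.span ℝ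
      {f : MvPolynomial (Fin n ⊕ Fin n) ℝ |
        ∃ l : List (Module.End ℝ (MvPolynomial (Fin n ⊕ Fin n) ℝ)),
          (∀ T ∈ l, T ∈ S1set n n₁ n₂) ∧
          f = l.prod (X (Sum.inl (⟨n₁ - 1, by omega⟩ : Fin n)) ^ m₁ *
                X (Sum.inr (⟨n₂, by omega⟩ : Fin n)) ^ m₂)} =
    Submodule.span ℝ
      {f : MvPolynomial (Fin n ⊕ Fin n) ℝ |
        ∃ kk ll : Fin n → ℕ,
          (∑ i ∈ Finset.univ.filter (fun i : Fin n => i.val < n₁), kk i) = m₁ ∧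
          (∑ t ∈ Finset.univ.filter (fun t : Fin n => n₂ ≤ t.val), ll t) = m₂ ∧
          f = (∏ i ∈ Finset.univ.filter (fun i : Fin n => i.val < n₁),
                X (Sum.inl i) ^ kk i) *
              (∏ t ∈ Finset.univ.filter (fun t : Fin n => n₂ ≤ t.val),
                X (Sum.inr t) ^ ll t)} := by
  rw [setOf_prod_X_pow_eq_image_blockExponents, X_pow_eq_monomial, X_pow_eq_monomial,
    monomial_mul, one_mul]
  refine le_antisymm
    (Submodule.span_le.2 (listOrbit_subset ?_ (apply_mem_blockSpan_of_mem_S1set (by omega))))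
    (Submodule.span_le.2 ?_)
  · exact Submodule.subset_span ⟨_, single_add_single_mem_blockExponents
      (disjoint_xBlock_yBlock n₁ n₂) (by simp [xBlock]; omega) (by simp [yBlock]), rfl⟩
  · rintro _ ⟨d, hd, rfl⟩
    exact monomial_mem_span_listOrbit (n₁ := n₁) (n₂ := n₂) (by omega) (ρ := ⟨n₁ - 1, by omega⟩)
      (τ := ⟨n₂, h2⟩) (by simp only; omega) rfl hd
end

section
/- Let n ≥ 2 and n₁ be an integer with 1 ≤ n₁ and n₁+1 < n. Let S be the following finite set of ℝ-linear endomorphisms of B = ℝ[x₁,…,xₙ,y₁,…,yₙ]: f ↦ −x_i·∂f/∂x_r − y_i·∂f/∂y_r for 1 ≤ i < r ≤ n₁; f ↦ −x_i·x_s·f − y_i·∂f/∂y_s for 1 ≤ i ≤ n₁ < s ≤ n; and f ↦ x_s·∂f/∂x_j − y_j·∂f/∂y_s for n₁ < j < s ≤ n. Let m₁, m₂ ∈ ℕ, set v = x_{n₁+1}^{m₁}·y_n^{m₂}, and for k ∈ ℕ let W_k be the ℝ-linear span of all polynomials T₁(T₂(⋯T_j(v)⋯)) with 0 ≤ j ≤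 k and T₁,…,T_j ∈ S. Then there exist real constants c₁, c₂ > 0 and K ∈ ℕ such that c₁·k^{n−1} ≤ dim W_k ≤ c₂·k^{n−1} for all k ≥ K. -/
open MvPolynomial

/-- The set S of negative-root-vector endomorphisms for the pair (n₁, n₂ = n)
(x's are `Sum.inl`, y's `Sum.inr`, 0-based indexing: 1 ≤ i < r ≤ n₁ becomes
i < r, r.val < n₁; 1 ≤ i ≤ n₁ < s ≤ n becomes i.val < n₁ ≤ s.val;
n₁ < j < s ≤ n becomes n₁ ≤ j.val, j < s). -/
def Sset (n n₁ : ℕ) : Set (Module.End ℝ (MvPolynomial (Fin n ⊕ Fin n) ℝ)) :=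
  {T | (∃ i r : Fin n, i < r ∧ r.val < n₁ ∧
          T = -(mulE (X (Sum.inl i)) * pdE (Sum.inl r))
                - mulE (X (Sum.inr i)) * pdE (Sum.inr r)) ∨
       (∃ i s : Fin n, i.val < n₁ ∧ n₁ ≤ s.val ∧
          T = -mulE (X (Sum.inl i) * X (Sum.inl s))
                - mulE (X (Sum.inr i)) * pdE (Sum.inr s)) ∨
       (∃ j s : Fin n, n₁ ≤ j.val ∧ j < s ∧
          T = mulE (X (Sum.inl s)) * pdE (Sum.inl j)
                - mulE (X (Sum.inr j)) * pdE (Sum.inr s))}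

/-- W_k: span of all T₁(T₂(⋯T_j(v)⋯)) with 0 ≤ j ≤ k, T's in S. -/
noncomputable def Wk (n : ℕ) (S : Set (Module.End ℝ (MvPolynomial (Fin n ⊕ Fin n) ℝ)))
    (v : MvPolynomial (Fin n ⊕ Fin n) ℝ) (k : ℕ) :
    Submodule ℝ (MvPolynomial (Fin n ⊕ Fin n) ℝ) :=
  Submodule.span ℝ
    {f | ∃ l : List (Module.End ℝ (MvPolynomial (Fin n ⊕ Fin n) ℝ)),
      l.length ≤ k ∧ (∀ T ∈ l, T ∈ S) ∧ f = l.prod v}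

/-!
Every operator in `S` preserves two weights of a monomial, its `y`-degree and its signed
`x`-degree (`x_i` counts `+1` for `i ≤ n₁` and `-1` otherwise), and raises the total degree by
at most `2`. Hence `W_k` is spanned by monomials with the weights of `v` and degree at most
`deg v + 2k`. In such a monomial each `y`-exponent is at most `m₂`, each `x`-exponent at most
`deg v + 2k`, and the exponent of `x₁` is determined by the others through the signed weight:
this leaves `O(k^(n-1))` monomials.

Conversely, for `i ≤ n₁ < s` the operator `-x_i x_s - y_i ∂/∂y_s` becomes multiplication by
`-x_i x_s` once every `y_j` with `j ≠ n` is set to zero, because `y_i` is one of them. Products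
of these operators along the `n - 1` edges of a spanning tree of the bipartite graph between
`{x_i : i ≤ n₁}` and `{x_s : s > n₁}` therefore map to `± x^e v` with pairwise distinct
exponents `e`, one for each choice of at most `k / (n - 1)` factors per edge.
-/

theorem Fintype.apply_eq_of_sum_eq_of_forall_ne {ι M : Type*} [Fintype ι] [DecidableEq ι]
    [AddCancelCommMonoid M] {f g : ι → M} (a : ι) (hsum : ∑ i, f i = ∑ i, g i)
    (hne : ∀ i ≠ a, f i = g i) : f a = g a := by
  rw [Fintype.sum_eq_add_sum_compl a, Fintype.sum_eq_add_sum_compl a,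
    Finset.sum_congr rfl fun i hi => hne i (by simpa using hi)] at hsum
  exact add_right_cancel hsum

theorem Finsupp.eq_of_weight_eq_of_forall_ne {σ : Type*} [Fintype σ] [DecidableEq σ]
    {w : σ → ℤ} {a : σ} (ha : w a ≠ 0) {d d' : σ →₀ ℕ}
    (hw : weight w d = weight w d') (hne : ∀ t ≠ a, d t = d' t) : d = d' := by
  ext t
  obtain rfl | ht := eq_or_ne t a
  · rw [weight_eq_sum, weight_eq_sum] at hw
    have := Fintype.apply_eq_of_sum_eq_of_forall_ne t hw fun i hi => by rw [hne i hi]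
    simpa [ha] using this
  · exact hne t ht

theorem Finsupp.weight_sub_single_add_single {σ M : Type*} [AddCommMonoid M] {w : σ → M}
    {d : σ →₀ ℕ} {u v : σ} (hd : d u ≠ 0) (huv : w u = w v) :
    weight w (d - single u 1 + single v 1) = weight w d := by
  rw [map_add, weight_single, one_smul, ← huv, weight_sub_single_add hd]

theorem List.prod_flatMap_replicate {ι M : Type*} [Monoid M] (g : ι → M) (τ : ι → ℕ)
    (l : List ι) :
    (l.flatMap fun j => List.replicate (τ j) (g j)).prod = (l.map fun j => g j ^ τ j).prod := by
  induction l <;> simp [*]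

namespace MvPolynomial

variable {σ R : Type*} [CommSemiring R]

theorem map_mem_restrictSupport {s t : Set (σ →₀ ℕ)}
    (T : MvPolynomial σ R →ₗ[R] MvPolynomial σ R)
    (hT : ∀ d ∈ s, T (monomial d 1) ∈ restrictSupport R t) {f : MvPolynomial σ R}
    (hf : f ∈ restrictSupport R s) : T f ∈ restrictSupport R t := by
  have : restrictSupport R s ≤ (restrictSupport R t).comap T := by
    rw [restrictSupport_eq_span, Submodule.span_le]
    rintro _ ⟨d, hd, rfl⟩
    exact hT d hd
  exact this hf

theorem X_mul_pderiv_mem_restrictSupport {s t : Set (σ →₀ ℕ)} {u v : σ}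
    (hst : ∀ d ∈ s, d u ≠ 0 → d - Finsupp.single u 1 + Finsupp.single v 1 ∈ t)
    {f : MvPolynomial σ R} (hf : f ∈ restrictSupport R s) :
    X v * pderiv u f ∈ restrictSupport R t := by
  refine map_mem_restrictSupport ((LinearMap.mulLeft R (X v)).comp (pderiv u).toLinearMap)
    (fun d hd => ?_) hf
  change X v * pderiv u (monomial d (1 : R)) ∈ _
  rw [pderiv_monomial, X, monomial_mul, one_mul, add_comm, monomial_mem_restrictSupport]
  by_cases hu : d u = 0
  · simp [hu]
  · exact Or.inl (hst d hd hu)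

theorem X_mul_X_mul_mem_restrictSupport {s t : Set (σ →₀ ℕ)} {u v : σ}
    (hst : ∀ d ∈ s, d + Finsupp.single u 1 + Finsupp.single v 1 ∈ t)
    {f : MvPolynomial σ R} (hf : f ∈ restrictSupport R s) :
    X u * X v * f ∈ restrictSupport R t := by
  refine map_mem_restrictSupport (LinearMap.mulLeft R (X u * X v)) (fun d hd => ?_) hf
  rw [LinearMap.mulLeft_apply, X, X, monomial_mul, monomial_mul, one_mul, one_mul,
    monomial_mem_restrictSupport]
  exact Or.inl (by simpa only [add_comm, add_left_comm] using hst d hd)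

theorem finite_restrictSupport {s : Set (σ →₀ ℕ)} (hs : s.Finite) :
    Module.Finite R (restrictSupport R s) :=
  have := hs.to_subtype
  Module.Finite.of_basis (basisRestrictSupport R s)

theorem finrank_restrictSupport [StrongRankCondition R] (s : Set (σ →₀ ℕ)) :
    Module.finrank R (restrictSupport R s) = s.ncard := by
  rw [Module.finrank_eq_nat_card_basis (basisRestrictSupport R s), Nat.card_coe_set_eq]

theorem linearIndependent_monomial {K ι : Type*} [Field K] {M : ι → σ →₀ ℕ}
    (hM : Function.Injective M) {c : ι → K} (hc : ∀ i, c i ≠ 0) :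
    LinearIndependent K fun i => monomial (M i) (c i) := by
  have h := ((basisMonomials σ K).linearIndependent.comp M hM).units_smul
    (fun i => Units.mk0 (c i) (hc i))
  have : (fun i => Units.mk0 (c i) (hc i)) • (basisMonomials σ K ∘ M) =
      fun i => monomial (M i) (c i) := by
    ext1 i
    simp [smul_monomial]
  rwa [this] at h

end MvPolynomial

namespace LuoXu

noncomputable section

open Finsupp

variable {n n₁ : ℕ}

theorem Wk_le_of_mapsTo {S : Set (Module.End ℝ (MvPolynomial (Fin n ⊕ Fin n) ℝ))}
    {v : MvPolynomial (Fin n ⊕ Fin n) ℝ}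
    {V : ℕ → Submodule ℝ (MvPolynomial (Fin n ⊕ Fin n) ℝ)} (hV : Monotone V)
    (hv : v ∈ V 0) (hS : ∀ T ∈ S, ∀ k, ∀ f ∈ V k, T f ∈ V (k + 1)) (k : ℕ) :
    Wk n S v k ≤ V k := by
  rw [Wk, Submodule.span_le]
  rintro _ ⟨l, hlk, hlS, rfl⟩
  refine hV hlk ?_
  clear hlk
  induction l with
  | nil => exact hv
  | cons T l ih =>
    exact hS T (hlS T List.mem_cons_self) _ _ (ih fun U hU => hlS U (List.mem_cons_of_mem T hU))

def yDeg : Fin n ⊕ Fin n → ℕ := Sum.elim 0 1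

def xSign (n₁ : ℕ) : Fin n ⊕ Fin n → ℤ :=
  Sum.elim (fun i => if (i : ℕ) < n₁ then 1 else -1) 0

def weightClass (n₁ : ℕ) (d₀ : Fin n ⊕ Fin n →₀ ℕ) (N : ℕ) :
    Set (Fin n ⊕ Fin n →₀ ℕ) :=
  {d | weight yDeg d = weight yDeg d₀ ∧ weight (xSign n₁) d = weight (xSign n₁) d₀ ∧
    degree d ≤ N}

section WeightClass

variable {d₀ : Fin n ⊕ Fin n →₀ ℕ}

theorem weightClass_mono {N N' : ℕ} (h : N ≤ N') :
    weightClass n₁ d₀ N ⊆ weightClass n₁ d₀ N' :=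
  fun _ ⟨hy, hx, hd⟩ => ⟨hy, hx, hd.trans h⟩

theorem weightClass_finite (N : ℕ) : (weightClass n₁ d₀ N).Finite :=
  (finite_of_degree_le N).subset fun _ h => h.2.2

instance (N : ℕ) : FiniteDimensional ℝ (restrictSupport ℝ (weightClass n₁ d₀ N)) :=
  finite_restrictSupport (weightClass_finite N)

theorem sub_single_add_single_mem_weightClass {N : ℕ} {u v : Fin n ⊕ Fin n}
    (hy : yDeg u = yDeg v) (hx : xSign n₁ u = xSign n₁ v) :
    ∀ d ∈ weightClass n₁ d₀ N, d u ≠ 0 →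
      d - single u 1 + single v 1 ∈ weightClass n₁ d₀ N := by
  rintro d ⟨dy, dx, dd⟩ hu
  refine ⟨by rwa [weight_sub_single_add_single hu hy],
    by rwa [weight_sub_single_add_single hu hx], ?_⟩
  rwa [degree_eq_weight_one, weight_sub_single_add_single (w := fun _ => 1) (v := v) hu rfl,
    ← degree_eq_weight_one]

theorem add_single_add_single_mem_weightClass {N : ℕ} {i s : Fin n} (hi : (i : ℕ) < n₁)
    (hs : n₁ ≤ s) : ∀ d ∈ weightClass n₁ d₀ N,
      d + single (Sum.inl i) 1 + single (Sum.inl s) 1 ∈ weightClass n₁ d₀ (N + 2) := by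
  rintro d ⟨dy, dx, dd⟩
  refine ⟨?_, ?_, ?_⟩ <;> simp only [map_add, weight_single, degree_single, dy, dx]
  · simp [yDeg]
  · simp [xSign, hi, not_lt.2 hs]
  · omega

theorem apply_mem_restrictSupport_weightClass {N : ℕ} {T : Module.End ℝ _}
    (hT : T ∈ Sset n n₁) {f : MvPolynomial (Fin n ⊕ Fin n) ℝ}
    (hf : f ∈ restrictSupport ℝ (weightClass n₁ d₀ N)) :
    T f ∈ restrictSupport ℝ (weightClass n₁ d₀ (N + 2)) := by
  have hf' := restrictSupport_mono ℝ (weightClass_mono (Nat.le_add_right N 2)) hf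
  have hy {i j : Fin n} : ∀ d ∈ weightClass n₁ d₀ (N + 2), d (.inr j) ≠ 0 →
      d - single (.inr j) 1 + single (.inr i) 1 ∈ weightClass n₁ d₀ (N + 2) :=
    sub_single_add_single_mem_weightClass rfl rfl
  obtain ⟨i, r, hir, hr, rfl⟩ | ⟨i, s, hi, hs, rfl⟩ | ⟨j, s, hj, hjs, rfl⟩ := hT
  · refine sub_mem (neg_mem (X_mul_pderiv_mem_restrictSupport ?_ hf'))
      (X_mul_pderiv_mem_restrictSupport hy hf')
    refine sub_single_add_single_mem_weightClass rfl ?_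
    simp [xSign, hr, lt_trans (Fin.lt_def.1 hir) hr]
  · exact sub_mem (neg_mem (X_mul_X_mul_mem_restrictSupport
      (add_single_add_single_mem_weightClass hi hs) hf)) (X_mul_pderiv_mem_restrictSupport hy hf')
  · refine sub_mem (X_mul_pderiv_mem_restrictSupport ?_ hf')
      (X_mul_pderiv_mem_restrictSupport hy hf')
    refine sub_single_add_single_mem_weightClass rfl ?_
    simp [xSign, not_lt.2 hj, not_lt.2 (hj.trans hjs.le)]

theorem Wk_le_restrictSupport_weightClass (k : ℕ) :
    Wk n (Sset n n₁) (monomial d₀ 1) k ≤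
      restrictSupport ℝ (weightClass n₁ d₀ (degree d₀ + 2 * k)) := by
  refine Wk_le_of_mapsTo
    (V := fun k => restrictSupport ℝ (weightClass n₁ d₀ (degree d₀ + 2 * k)))
    (fun _ _ h => restrictSupport_mono ℝ (weightClass_mono (by omega))) ?_ ?_ k
  · simp [weightClass]
  · intro T hT k f hf
    rw [mul_add, ← add_assoc]
    exact apply_mem_restrictSupport_weightClass hT hf

theorem finiteDimensional_Wk (k : ℕ) :
    FiniteDimensional ℝ (Wk n (Sset n n₁) (monomial d₀ 1) k) :=
  Submodule.finiteDimensional_of_le (Wk_le_restrictSupport_weightClass k)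

end WeightClass

variable {m : ℕ}

theorem ncard_weightClass_le (h1 : 0 < n₁) (d₀ : Fin (m + 1) ⊕ Fin (m + 1) →₀ ℕ)
    (N : ℕ) :
    (weightClass n₁ d₀ N).ncard ≤ (weight yDeg d₀ + 1) ^ (m + 1) * (N + 1) ^ m := by
  let box : Finset ((Fin (m + 1) → ℕ) × (Fin m → ℕ)) :=
    Fintype.piFinset (fun _ => Finset.range (weight yDeg d₀ + 1)) ×ˢ
      Fintype.piFinset (fun _ => Finset.range (N + 1))
  have hbox : box.card = (weight yDeg d₀ + 1) ^ (m + 1) * (N + 1) ^ m := by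
    simp [box, Fintype.card_piFinset]
  rw [← hbox, ← Set.ncard_coe_finset]
  refine Set.ncard_le_ncard_of_injOn (fun d => (fun i => d (.inr i), fun j => d (.inl j.succ)))
    ?_ ?_ box.finite_toSet
  · rintro d ⟨dy, -, dd⟩
    simp only [box, Finset.coe_product, Set.mem_prod, Finset.mem_coe, Fintype.mem_piFinset,
      Finset.mem_range, Nat.lt_succ_iff]
    exact ⟨fun i => dy ▸ le_weight yDeg (by simp [yDeg]) d, fun j => (le_degree _ d).trans dd⟩
  · rintro d ⟨-, dx, -⟩ d' ⟨-, dx', -⟩ h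
    simp only [Prod.mk.injEq, funext_iff] at h
    refine eq_of_weight_eq_of_forall_ne (a := .inl 0) (by simp [xSign, h1]) (dx.trans dx'.symm) ?_
    rintro (i | i) hi
    · obtain ⟨j, rfl⟩ := Fin.exists_succ_eq.2 (fun h => hi (congrArg _ h))
      exact h.2 j
    · exact h.1 i

theorem finrank_Wk_le (h1 : 0 < n₁) (d₀ : Fin (m + 1) ⊕ Fin (m + 1) →₀ ℕ) (k : ℕ) :
    Module.finrank ℝ (Wk (m + 1) (Sset (m + 1) n₁) (monomial d₀ 1) k) ≤
      (weight yDeg d₀ + 1) ^ (m + 1) * (degree d₀ + 2 * k + 1) ^ m :=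
  calc _ ≤ Module.finrank ℝ
        (restrictSupport ℝ (weightClass n₁ d₀ (degree d₀ + 2 * k))) :=
        Submodule.finrank_mono (Wk_le_restrictSupport_weightClass k)
    _ ≤ _ := (finrank_restrictSupport _).trans_le (ncard_weightClass_le h1 d₀ _)

def opB (i s : Fin n) : Module.End ℝ (MvPolynomial (Fin n ⊕ Fin n) ℝ) :=
  -mulE (X (.inl i) * X (.inl s)) - mulE (X (.inr i)) * pdE (.inr s)

theorem opB_mem_Sset {i s : Fin n} (hi : (i : ℕ) < n₁) (hs : n₁ ≤ s) :
    opB i s ∈ Sset n n₁ :=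
  Or.inr (Or.inl ⟨i, s, hi, hs, rfl⟩)

def zeroYExcept (b : Fin n) :
    MvPolynomial (Fin n ⊕ Fin n) ℝ →ₐ[ℝ] MvPolynomial (Fin n ⊕ Fin n) ℝ :=
  aeval (Sum.elim (fun i => X (.inl i)) fun j => if j = b then X (.inr j) else 0)

theorem zeroYExcept_opB {i b : Fin n} (hib : i ≠ b) (s : Fin n) (f : MvPolynomial _ ℝ) :
    zeroYExcept b (opB i s f) = -(X (.inl i) * X (.inl s)) * zeroYExcept b f := by
  simp [opB, zeroYExcept, mulE, pdE, hib, mul_assoc]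

section Edges

variable (a : Fin (m + 1))

/-- The pairs `{j.succ, partner a j.succ}` form a spanning tree of the complete bipartite graph
between `{i | i < a}` and `{s | a ≤ s}` in which every vertex except `0` and `a` is a leaf; this
is what makes `edgeExp a` injective. -/
def partner (u : Fin (m + 1)) : Fin (m + 1) := if u < a then a else 0

def edgeOp (j : Fin m) : Module.End ℝ (MvPolynomial (Fin (m + 1) ⊕ Fin (m + 1)) ℝ) :=
  if j.succ < a then opB j.succ a else opB 0 j.succ

def edgeExp (τ : Fin m → ℕ) : Fin (m + 1) ⊕ Fin (m + 1) →₀ ℕ :=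
  ∑ j, τ j • (single (.inl j.succ) 1 + single (.inl (partner a j.succ)) 1)

def edgeWord (τ : Fin m → ℕ) : List (Fin m) :=
  (List.finRange m).flatMap fun j => List.replicate (τ j) j

variable {a}

theorem edgeOp_mem_Sset (h1 : 0 < n₁) (ha : (a : ℕ) = n₁) (j : Fin m) :
    edgeOp a j ∈ Sset (m + 1) n₁ := by
  unfold edgeOp
  split_ifs with h
  · exact opB_mem_Sset (ha ▸ h) ha.ge
  · exact opB_mem_Sset h1 (ha ▸ not_lt.1 h)

theorem zeroYExcept_edgeOp {b : Fin (m + 1)} (hab : a < b) (j : Fin m)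
    (f : MvPolynomial _ ℝ) :
    zeroYExcept b (edgeOp a j f) =
      -(X (.inl j.succ) * X (.inl (partner a j.succ))) * zeroYExcept b f := by
  unfold edgeOp partner
  split_ifs with h
  · exact zeroYExcept_opB (h.trans hab).ne _ _
  · rw [zeroYExcept_opB ((Fin.zero_le a).trans_lt hab).ne, mul_comm (X _)]

theorem length_edgeWord (τ : Fin m → ℕ) : (edgeWord τ).length = ∑ j, τ j := by
  simp [edgeWord, List.length_flatMap, Fin.sum_univ_def]

theorem prod_map_edgeWord {M : Type*} [CommMonoid M] (g : Fin m → M) (τ : Fin m → ℕ) :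
    ((edgeWord τ).map g).prod = ∏ j, g j ^ τ j := by
  simp [edgeWord, List.map_flatMap, List.prod_flatMap_replicate, Fin.prod_univ_def]

theorem zeroYExcept_prod_edgeWord {b : Fin (m + 1)} (hab : a < b) (τ : Fin m → ℕ)
    (f : MvPolynomial _ ℝ) :
    zeroYExcept b (((edgeWord τ).map (edgeOp a)).prod f) =
      monomial (edgeExp a τ) (∏ j, (-1) ^ τ j) * zeroYExcept b f := by
  have hprod (l : List (Fin m)) : zeroYExcept b ((l.map (edgeOp a)).prod f) =
      (l.map fun j => -(X (.inl j.succ) * X (.inl (partner a j.succ)))).prod *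
        zeroYExcept b f := by
    induction l with
    | nil => simp
    | cons j l ih => simp [Module.End.mul_apply, zeroYExcept_edgeOp hab, ih, mul_assoc]
  rw [hprod, prod_map_edgeWord, edgeExp, monomial_sum_prod]
  congr 1
  refine Finset.prod_congr rfl fun j _ => ?_
  rw [← monomial_pow]
  simp [X, monomial_mul]

theorem edgeExp_apply_succ (τ : Fin m → ℕ) {v : Fin m} (hv : v.succ ≠ a) :
    edgeExp a τ (.inl v.succ) = τ v := by
  have hpartner (j : Fin m) : partner a j.succ ≠ v.succ := by
    unfold partner
    split_ifs
    exacts [hv.symm, (Fin.succ_ne_zero v).symm]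
  simp [edgeExp, single_apply, hpartner]

theorem degree_edgeExp (τ : Fin m → ℕ) : degree (edgeExp a τ) = 2 * ∑ j, τ j := by
  simp [edgeExp, map_sum, Finset.mul_sum, two_mul]

theorem edgeExp_injective (ha : a ≠ 0) : Function.Injective (edgeExp (m := m) a) := by
  intro τ τ' h
  obtain ⟨v₀, rfl⟩ := Fin.exists_succ_eq.2 ha
  have hne (v : Fin m) (hv : v ≠ v₀) : τ v = τ' v := by
    have hv' : v.succ ≠ v₀.succ := Fin.succ_inj.not.2 hv
    rw [← edgeExp_apply_succ τ hv', h, edgeExp_apply_succ τ' hv']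
  have hsum : ∑ j, τ j = ∑ j, τ' j := by
    have := congrArg degree h
    rw [degree_edgeExp, degree_edgeExp] at this
    omega
  funext v
  obtain rfl | hv := eq_or_ne v v₀
  · exact Fintype.apply_eq_of_sum_eq_of_forall_ne v hsum hne
  · exact hne v hv

theorem prod_edgeWord_mem_Wk (h1 : 0 < n₁) (ha : (a : ℕ) = n₁) {τ : Fin m → ℕ} {k : ℕ}
    (hτ : ∑ j, τ j ≤ k) (v : MvPolynomial _ ℝ) :
    ((edgeWord τ).map (edgeOp a)).prod v ∈ Wk (m + 1) (Sset (m + 1) n₁) v k := by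
  refine Submodule.subset_span ⟨_, ?_, ?_, rfl⟩
  · rwa [List.length_map, length_edgeWord]
  · simp only [List.mem_map]
    rintro _ ⟨j, -, rfl⟩
    exact edgeOp_mem_Sset h1 ha j

theorem linearIndependent_prod_edgeWord {b : Fin (m + 1)} (ha : a ≠ 0) (hab : a < b)
    (m₁ m₂ : ℕ) : LinearIndependent ℝ fun τ : Fin m → ℕ =>
      ((edgeWord τ).map (edgeOp a)).prod (X (.inl a) ^ m₁ * X (.inr b) ^ m₂) := by
  refine LinearIndependent.of_comp (zeroYExcept b).toLinearMap ?_
  have hv : zeroYExcept b (X (.inl a) ^ m₁ * X (.inr b) ^ m₂) =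
      monomial (single (.inl a) m₁ + single (.inr b) m₂) 1 := by
    simp only [zeroYExcept, map_mul, map_pow, aeval_X, Sum.elim_inl, Sum.elim_inr, if_true]
    rw [X_pow_eq_monomial, X_pow_eq_monomial, monomial_mul, one_mul]
  simp only [Function.comp_def, AlgHom.toLinearMap_apply, zeroYExcept_prod_edgeWord hab, hv,
    monomial_mul, mul_one]
  exact linearIndependent_monomial ((add_left_injective _).comp (edgeExp_injective ha))
    fun τ => Finset.prod_ne_zero_iff.2 fun j _ => pow_ne_zero _ (by norm_num)

end Edges

theorem pow_le_finrank_Wk {m₁ m₂ : ℕ} (h1 : 0 < n₁) {a b : Fin (m + 1)}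
    (ha : (a : ℕ) = n₁) (hab : a < b) (k : ℕ) :
    (k / m + 1) ^ m ≤ Module.finrank ℝ (Wk (m + 1) (Sset (m + 1) n₁)
      (monomial (single (.inl a) m₁ + single (.inr b) m₂) 1) k) := by
  have := finiteDimensional_Wk (n₁ := n₁)
    (d₀ := single (.inl a) m₁ + single (.inr b) m₂) k
  have hv : monomial (single (.inl a) m₁ + single (.inr b) m₂) (1 : ℝ) =
      X (Sum.inl a) ^ m₁ * X (Sum.inr b) ^ m₂ := by
    rw [X_pow_eq_monomial, X_pow_eq_monomial, monomial_mul, one_mul]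
  rw [hv] at this ⊢
  have ha0 : a ≠ 0 := fun h => by simp [h] at ha; omega
  set v : MvPolynomial (Fin (m + 1) ⊕ Fin (m + 1)) ℝ := X (.inl a) ^ m₁ * X (.inr b) ^ m₂
  let F (τ : Fin m → Fin (k / m + 1)) := ((edgeWord fun j => (τ j : ℕ)).map (edgeOp a)).prod v
  have hF (τ) : F τ ∈ Wk (m + 1) (Sset (m + 1) n₁) v k := by
    refine prod_edgeWord_mem_Wk h1 ha ?_ _
    calc ∑ j, (τ j : ℕ) ≤ ∑ _j : Fin m, k / m :=
          Finset.sum_le_sum fun j _ => Nat.lt_succ_iff.1 (τ j).isLt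
      _ ≤ k := by simpa using Nat.mul_div_le k m
  have hli : LinearIndependent ℝ F := (linearIndependent_prod_edgeWord ha0 hab m₁ m₂).comp _
    fun τ τ' h => funext fun j => Fin.ext (congrFun h j)
  calc (k / m + 1) ^ m = Fintype.card (Fin m → Fin (k / m + 1)) := by simp
    _ = Module.finrank ℝ (Submodule.span ℝ (Set.range F)) := (finrank_span_eq_card hli).symm
    _ ≤ _ := Submodule.finrank_mono (Submodule.span_le.2 (Set.range_subset_iff.2 hF))

end

end LuoXu

theorem exists_pow_bounds_of_nat_bounds {f : ℕ → ℕ} {p A B : ℕ} (hp : 0 < p) (hA : 0 < A)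
    (hlow : ∀ k, (k / p + 1) ^ p ≤ f k) (hup : ∀ k, f k ≤ A * (B + 2 * k + 1) ^ p) :
    ∃ c₁ c₂ : ℝ, 0 < c₁ ∧ 0 < c₂ ∧ ∃ K : ℕ, ∀ k ≥ K,
      c₁ * (k : ℝ) ^ p ≤ f k ∧ (f k : ℝ) ≤ c₂ * (k : ℝ) ^ p := by
  refine ⟨(1 / p) ^ p, A * (B + 3) ^ p, by positivity, by positivity, 1,
    fun k hk => ⟨?_, ?_⟩⟩
  · have hdiv : (k : ℝ) / p ≤ (k / p : ℕ) + 1 := by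
      rw [div_le_iff₀ (by positivity)]
      exact_mod_cast (Nat.lt_mul_div_succ k hp).le.trans_eq (mul_comm _ _)
    calc (1 / p : ℝ) ^ p * k ^ p = ((k : ℝ) / p) ^ p := by rw [← mul_pow, one_div_mul_eq_div]
      _ ≤ (((k / p : ℕ) + 1 : ℕ) : ℝ) ^ p := by gcongr; push_cast; exact hdiv
      _ ≤ f k := by exact_mod_cast hlow k
  · have hk1 : (1 : ℝ) ≤ k := by exact_mod_cast hk
    calc (f k : ℝ) ≤ A * (B + 2 * k + 1) ^ p := by exact_mod_cast hup k
      _ ≤ A * ((B + 3) * k) ^ p := by gcongr; nlinarith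
      _ = A * (B + 3) ^ p * k ^ p := by rw [mul_pow, mul_assoc]

/-- v = x_{n₁+1}^{m₁} yₙ^{m₂} (0-based: x-index n₁, y-index n−1). -/
theorem stmt_10 (n n₁ m₁ m₂ : ℕ) (h1 : 1 ≤ n₁) (h2 : n₁ + 1 < n) :
    ∃ c₁ c₂ : ℝ, 0 < c₁ ∧ 0 < c₂ ∧ ∃ K : ℕ, ∀ k ≥ K,
      c₁ * (k : ℝ) ^ (n - 1) ≤
        (Module.finrank ℝ (Wk n (Sset n n₁)
          (X (Sum.inl (⟨n₁, by omega⟩ : Fin n)) ^ m₁ *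
            X (Sum.inr (⟨n - 1, by omega⟩ : Fin n)) ^ m₂) k) : ℝ) ∧
      (Module.finrank ℝ (Wk n (Sset n n₁)
          (X (Sum.inl (⟨n₁, by omega⟩ : Fin n)) ^ m₁ *
            X (Sum.inr (⟨n - 1, by omega⟩ : Fin n)) ^ m₂) k) : ℝ) ≤
        c₂ * (k : ℝ) ^ (n - 1) := by
  obtain ⟨m, rfl⟩ : ∃ m, n = m + 1 := ⟨n - 1, by omega⟩
  simp only [Nat.add_sub_cancel]
  rw [X_pow_eq_monomial, X_pow_eq_monomial, monomial_mul, one_mul]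
  exact exists_pow_bounds_of_nat_bounds (by omega) (by positivity)
    (LuoXu.pow_le_finrank_Wk h1 rfl (Fin.mk_lt_mk.2 (by omega))) (LuoXu.finrank_Wk_le h1 _)
end
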